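/- arXiv:1403.7656 — 9 statements merged into one kernel-verified Lean document; each statement's English description precedes it below -/
import Mathlib

section
/- For every integer n ≥ 1, the coefficient of X^{n-1} in the formal power series 1/((1-X)^{n+2}(1-2X)^n) over ℚ equals n·N_{n+1}; equivalently, this coefficient equals Σ_{k=0}^{n-1} C(3n, n-1-k)·C(n+k-1, k). -/
/-!
Expanding both factors as negative binomial series, the coefficient of `X ^ d` (with `n = d + 1`)
is `∑_{k + l = d} 2 ^ k C(d + k, d) C(d + 2 + l, d + 2)`. The multinomial expansion
`2 ^ k C(d + k, d) = ∑_{i + j = k} C(d + i, d) C(d + i + j, d + i)` turns this into a sum over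
`i + j + l = d`; grouped by `i`, the sum over `j + l` is a coefficient of the product of two
negative binomial series, `(1 - X) ^ (-(d + i + 1)) (1 - X) ^ (-(d + 3))`, namely
`C(3d + 3, d - i)`. The Flajolet–Noy sum for `N_{n+1}` is the same sum after the shift
`i ↦ n + i` and the symmetry of binomial coefficients.
-/

open PowerSeries Finset

/-- `Ncn n` is the number of connected noncrossing graphs on `n` vertices,
given by the Flajolet–Noy formula for `n ≥ 2`, with `Ncn 1 = 1`. -/
noncomputable def Ncn (n : ℕ) : ℚ :=
  if n = 1 then 1
  else (1 / ((n : ℚ) - 1)) *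
    ∑ i ∈ Finset.Icc (n - 1) (2 * n - 3),
      ((3 * n - 3).choose (n + i) : ℚ) * ((i - 1).choose (i + 1 - n) : ℚ)

theorem Nat.sum_antidiagonal_add_choose_mul_add_choose (a b m : ℕ) :
    ∑ ij ∈ antidiagonal m, (a + ij.1).choose a * (b + ij.2).choose b =
      (a + b + 1 + m).choose (a + b + 1) := by
  have h := congrArg (fun u : ℤ⟦X⟧ˣ => coeff m u.val) (invOneSubPow_add ℤ (a + 1) (b + 1))
  simp only [add_add_add_comm a 1 b 1, ← add_assoc, Units.val_mul,
    invOneSubPow_val_succ_eq_mk_add_choose, coeff_mul, coeff_mk] at h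
  exact_mod_cast h.symm

theorem Nat.sum_antidiagonal_choose_mul_choose_eq_two_pow_mul (d k : ℕ) :
    ∑ ij ∈ antidiagonal k, (d + ij.1).choose d * (d + ij.1 + ij.2).choose (d + ij.1) =
      2 ^ k * (d + k).choose d := by
  have hterm : ∀ ij ∈ antidiagonal k,
      (d + ij.1).choose d * (d + ij.1 + ij.2).choose (d + ij.1) =
        (d + k).choose d * k.choose ij.1 := by
    rintro ⟨i, j⟩ hij
    rw [HasAntidiagonal.mem_antidiagonal] at hij
    subst hij
    rw [mul_comm, Nat.choose_mul (Nat.le_add_right d i)]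
    simp [add_assoc]
  rw [sum_congr rfl hterm, ← mul_sum,
    Nat.sum_antidiagonal_eq_sum_range_succ (fun i _ => k.choose i), Nat.sum_range_choose, mul_comm]

theorem Finset.Nat.sum_antidiagonal_sum_antidiagonal_fst {M : Type*} [AddCommMonoid M]
    (f : ℕ → ℕ → ℕ → M) (n : ℕ) :
    ∑ kl ∈ antidiagonal n, ∑ ij ∈ antidiagonal kl.1, f ij.1 ij.2 kl.2 =
      ∑ ip ∈ antidiagonal n, ∑ jl ∈ antidiagonal ip.2, f ip.1 jl.1 jl.2 := by
  rw [sum_sigma', sum_sigma']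
  refine sum_bij' (fun x _ => ⟨(x.2.1, x.2.2 + x.1.2), (x.2.2, x.1.2)⟩)
    (fun y _ => ⟨(y.1.1 + y.2.1, y.2.2), (y.1.1, y.2.1)⟩) ?_ ?_ ?_ ?_ ?_ <;>
  · rintro ⟨⟨_, _⟩, ⟨_, _⟩⟩ h
    simp only [mem_sigma, HasAntidiagonal.mem_antidiagonal] at h
    obtain ⟨rfl, rfl⟩ := h
    simp [add_assoc]

theorem Nat.sum_antidiagonal_two_pow_mul_choose_mul_choose (d : ℕ) :
    ∑ kl ∈ antidiagonal d, 2 ^ kl.1 * (d + kl.1).choose d * (d + 2 + kl.2).choose (d + 2) =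
      ∑ ip ∈ antidiagonal d, (3 * (d + 1)).choose ip.2 * (d + ip.1).choose ip.1 := by
  calc _ = ∑ kl ∈ antidiagonal d, ∑ ij ∈ antidiagonal kl.1, (d + ij.1).choose d *
          ((d + ij.1 + ij.2).choose (d + ij.1) * (d + 2 + kl.2).choose (d + 2)) := by
        simp only [← Nat.sum_antidiagonal_choose_mul_choose_eq_two_pow_mul, sum_mul, mul_assoc]
    _ = ∑ ip ∈ antidiagonal d, (d + ip.1).choose d * ∑ jl ∈ antidiagonal ip.2,
        (d + ip.1 + jl.1).choose (d + ip.1) * (d + 2 + jl.2).choose (d + 2) := by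
        rw [Finset.Nat.sum_antidiagonal_sum_antidiagonal_fst (fun i j l =>
          (d + i).choose d * ((d + i + j).choose (d + i) * (d + 2 + l).choose (d + 2)))]
        simp only [mul_sum]
    _ = _ := by
        refine sum_congr rfl fun ⟨i, p⟩ hip => ?_
        rw [HasAntidiagonal.mem_antidiagonal] at hip
        rw [Nat.sum_antidiagonal_add_choose_mul_add_choose, mul_comm,
          show 3 * (d + 1) = d + i + (d + 2) + 1 + p by omega, Nat.choose_symm_add,
          Nat.choose_symm_add (a := d)]

theorem PowerSeries.inv_one_sub_C_mul_X_pow_succ {k : Type*} [Field k] (c : k) (a : ℕ) :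
    ((1 - C c * X : k⟦X⟧) ^ (a + 1))⁻¹ = mk fun n => c ^ n * (a + n).choose a := by
  rw [inv_eq_iff_mul_eq_one (by simp)]
  simpa [rescale_mk, rescale_X] using
    congrArg (rescale c) (mk_add_choose_mul_one_sub_pow_eq_one k a)

theorem PowerSeries.coeff_pred_inv_one_sub_X_pow_mul_one_sub_two_mul_X_pow {k : Type*} [Field k]
    {n : ℕ} (hn : n ≠ 0) :
    coeff (n - 1) (((1 - X : k⟦X⟧) ^ (n + 2) * (1 - 2 * X) ^ n)⁻¹) =
      ∑ i ∈ range n, ((3 * n).choose (n - 1 - i) : k) * ((n + i - 1).choose i : k) := by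
  obtain ⟨d, rfl⟩ : ∃ d, n = d + 1 := ⟨n - 1, by omega⟩
  have h1 : (1 - X : k⟦X⟧) = 1 - C 1 * X := by simp
  have h2 : (1 - 2 * X : k⟦X⟧) = 1 - C 2 * X := by rw [map_ofNat]
  rw [PowerSeries.mul_inv_rev, h1, h2, show d + 1 + 2 = d + 2 + 1 by rfl,
    inv_one_sub_C_mul_X_pow_succ, inv_one_sub_C_mul_X_pow_succ, Nat.add_sub_cancel, coeff_mul]
  simp only [coeff_mk, one_pow, one_mul]
  have h := congrArg (Nat.cast : ℕ → k) (Nat.sum_antidiagonal_two_pow_mul_choose_mul_choose d)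
  push_cast at h
  rw [h, Nat.sum_antidiagonal_eq_sum_range_succ
    (fun i p => ((3 * (d + 1)).choose p : k) * (d + i).choose i)]
  simp [Nat.add_right_comm d 1]

theorem natCast_mul_Ncn_succ (n : ℕ) :
    (n : ℚ) * Ncn (n + 1) =
      ∑ i ∈ range n, ((3 * n).choose (n - 1 - i) : ℚ) * ((n + i - 1).choose i : ℚ) := by
  rcases n with _ | d
  · simp
  have hden : ((d + 1 + 1 : ℕ) : ℚ) - 1 = ((d + 1 : ℕ) : ℚ) := by push_cast; ring
  rw [Ncn, if_neg (by omega), hden, one_div, show d + 1 + 1 - 1 = d + 1 by omega,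
    show 2 * (d + 1 + 1) - 3 = 2 * d + 1 by omega, ← Ico_add_one_right_eq_Icc,
    sum_Ico_eq_sum_range, show 2 * d + 1 + 1 - (d + 1) = d + 1 by omega,
    mul_inv_cancel_left₀ (by positivity)]
  refine sum_congr rfl fun i hi => ?_
  rw [mem_range] at hi
  rw [show 3 * (d + 1 + 1) - 3 = 3 * (d + 1) by omega,
    show d + 1 + i + 1 - (d + 1 + 1) = i by omega,
    show d + 1 + 1 + (d + 1 + i) = 3 * (d + 1) - (d + 1 - 1 - i) by omega,
    Nat.choose_symm (by omega)]

theorem coeff_inv_eq_n_mul_Ncn (n : ℕ) (hn : 1 ≤ n) :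
    (PowerSeries.coeff (R := ℚ) (n - 1))
        (((1 - PowerSeries.X) ^ (n + 2) * (1 - 2 * PowerSeries.X) ^ n)⁻¹)
      = (n : ℚ) * Ncn (n + 1) ∧
    (PowerSeries.coeff (R := ℚ) (n - 1))
        (((1 - PowerSeries.X) ^ (n + 2) * (1 - 2 * PowerSeries.X) ^ n)⁻¹)
      = ∑ k ∈ Finset.range n,
          ((3 * n).choose (n - 1 - k) : ℚ) * ((n + k - 1).choose k : ℚ) := by
  have hcoeff :=
    coeff_pred_inv_one_sub_X_pow_mul_one_sub_two_mul_X_pow (k := ℚ) (Nat.one_le_iff_ne_zero.mp hn)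
  exact ⟨hcoeff.trans (natCast_mul_Ncn_succ n).symm, hcoeff⟩
end

section
/- For every integer n ≥ 1: N_n ≡ 1 (mod 3) if n = 3^m or n = 2·3^m for some integer m ≥ 0; N_n ≡ 2 (mod 3) if n = 3^a + 3^b for some integers a > b ≥ 0; and N_n ≡ 0 (mod 3) in all other cases. -/
/-!
Let `w` be the power series with `w(0) = 0` and `w = X (1 + w)³ + w²`, so that
`w = X φ(w)` with `φ = (1 + X)³ / (1 - X)`. Lagrange inversion gives
`n [Xⁿ] w = [Xⁿ⁻¹] φⁿ`, which is the Flajolet–Noy sum, so `F = X (1 + w)` is the generating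
function `∑ N_n Xⁿ`. Reduced mod 3 it satisfies `F³ + F² = X²`. The lacunary series
`G = ∑ X^(3^m)` satisfies `G³ = G - X` by Frobenius, hence `G + G²` satisfies the same cubic,
and the cubic has only one root of the form `X + O(X²)`. So `F ≡ G + G² (mod 3)`. Finally
`[Xⁿ] (G + G²)` is `[n = 3^m]` plus the number of ordered pairs `(a, b)` with `n = 3^a + 3^b`,
which is 1 for `n = 2·3^m` and 2 for `n = 3^a + 3^b`, `a ≠ b`: the 3-adic valuation of
`3^a + 3^b` is `min a b`, so the pair is determined up to order.
-/

open Finset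

open PowerSeries

section PrimePowers

theorem mem_range_pow_iff_of_not_dvd {p n : ℕ} (h : ¬ p ∣ n) :
    n ∈ Set.range (p ^ ·) ↔ n = 1 := by
  refine ⟨fun ⟨a, ha⟩ => ?_, fun hn => ⟨0, hn ▸ pow_zero p⟩⟩
  rcases a with _ | a
  · exact ha.symm
  · exact absurd (ha ▸ dvd_pow_self p a.succ_ne_zero) h

theorem mul_mem_range_pow_iff {p : ℕ} (hp : 1 < p) {m : ℕ} :
    p * m ∈ Set.range (p ^ ·) ↔ m ∈ Set.range (p ^ ·) := by
  refine ⟨fun ⟨a, ha⟩ => ?_, fun ⟨a, ha⟩ => ⟨a + 1, ha ▸ pow_succ' p a⟩⟩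
  rcases a with _ | a
  · exact absurd (Nat.eq_one_of_mul_eq_one_right ha.symm) hp.ne'
  · exact ⟨a, Nat.eq_of_mul_eq_mul_left (zero_lt_one.trans hp) ((pow_succ' p a).symm.trans ha)⟩

theorem pow_ne_pow_add_pow {p : ℕ} (hp : Odd p) (m a b : ℕ) : p ^ m ≠ p ^ a + p ^ b := by
  intro h
  exact Nat.not_even_iff_odd.mpr (hp.pow (n := m)) (h ▸ (hp.pow (n := a)).add_odd hp.pow)

variable {p : ℕ} [hp : Fact p.Prime]

theorem padicValNat_pow_add_pow (hp2 : p ≠ 2) (a b : ℕ) :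
    padicValNat p (p ^ a + p ^ b) = min a b := by
  wlog hba : b ≤ a generalizing a b
  · rw [add_comm, min_comm]
    exact this b a (by omega)
  have hndvd : ¬ p ∣ p ^ (a - b) + 1 := by
    rcases Nat.eq_zero_or_pos (a - b) with h | h
    · rw [h, pow_zero]
      exact fun hdvd => hp2 ((Nat.prime_dvd_prime_iff_eq hp.out Nat.prime_two).mp hdvd)
    · rw [Nat.dvd_add_right (dvd_pow_self p h.ne')]
      exact hp.out.not_dvd_one
  rw [show p ^ a + p ^ b = p ^ b * (p ^ (a - b) + 1) by
      rw [mul_add, ← pow_add, Nat.add_sub_cancel' hba, mul_one],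
    padicValNat.mul (pow_pos hp.out.pos b).ne' (by omega), padicValNat.prime_pow,
    padicValNat.eq_zero_of_not_dvd hndvd, min_eq_right hba, add_zero]

theorem pow_add_pow_eq_pow_add_pow_iff (hp2 : p ≠ 2) {a b c d : ℕ} :
    p ^ a + p ^ b = p ^ c + p ^ d ↔ a = c ∧ b = d ∨ a = d ∧ b = c := by
  refine ⟨fun h => ?_, by rintro (⟨rfl, rfl⟩ | ⟨rfl, rfl⟩) <;> ring⟩
  have hmin : min a b = min c d := by
    rw [← padicValNat_pow_add_pow hp2, ← padicValNat_pow_add_pow hp2, h]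
  have hmono := pow_right_mono₀ (M₀ := ℕ) hp.out.one_lt.le
  have hsplit : ∀ x y, p ^ x + p ^ y = p ^ min x y + p ^ max x y := fun x y => by
    rw [hmono.map_min, hmono.map_max, min_add_max]
  have hmax : max a b = max c d := by
    apply Nat.pow_right_injective hp.out.two_le
    have := hsplit a b ▸ hsplit c d ▸ h
    simp only [hmin] at this ⊢
    omega
  omega

end PrimePowers

namespace PowerSeries

section CommRing

variable {R : Type*} [CommRing R]

theorem eq_zero_of_forall_X_pow_dvd {f : R⟦X⟧} (h : ∀ n, X ^ (n + 1) ∣ f) : f = 0 := by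
  ext n
  exact X_pow_dvd_iff.mp (h n) n n.lt_succ_self

/-- The iterates `T^[k] 0` converge `X`-adically; their limit is the fixed point. -/
theorem exists_fixedPoint_of_contracting (T : R⟦X⟧ → R⟦X⟧) (hT0 : ∀ f, X ∣ f → X ∣ T f)
    (hT : ∀ f g k, X ∣ f → X ∣ g → X ^ k ∣ f - g → X ^ (k + 1) ∣ T f - T g) :
    ∃ w, X ∣ w ∧ T w = w := by
  have hX : ∀ k, X ∣ T^[k] 0 := fun k => by
    induction k with
    | zero => exact dvd_zero X
    | succ k ih => rw [Function.iterate_succ_apply']; exact hT0 _ ih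
  have hcauchy : ∀ k d, X ^ k ∣ T^[k + d] 0 - T^[k] 0 := fun k => by
    induction k with
    | zero => simp
    | succ k ih =>
      intro d
      rw [Nat.add_right_comm, Function.iterate_succ_apply', Function.iterate_succ_apply']
      exact hT _ _ k (hX _) (hX _) (ih d)
  set w : R⟦X⟧ := mk fun n => coeff n (T^[n + 1] 0)
  have hw : ∀ k, X ^ k ∣ w - T^[k] 0 := fun k => X_pow_dvd_iff.mpr fun n hn => by
    obtain ⟨d, rfl⟩ := Nat.exists_eq_add_of_lt hn
    have := X_pow_dvd_iff.mp (hcauchy (n + 1) d) n n.lt_succ_self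
    rw [map_sub, coeff_mk, ← Nat.add_right_comm]
    rwa [map_sub, sub_eq_zero, eq_comm, ← sub_eq_zero] at this
  have hwX : X ∣ w := sub_add_cancel w (T^[1] 0) ▸ dvd_add (pow_one (X : R⟦X⟧) ▸ hw 1) (hX 1)
  refine ⟨w, hwX, sub_eq_zero.mp (eq_zero_of_forall_X_pow_dvd fun k => ?_)⟩
  have := dvd_sub (hT _ _ k hwX (hX k) (hw k)) (hw (k + 1))
  rwa [Function.iterate_succ_apply', sub_sub_sub_cancel_right] at this

theorem coeff_subst_eq_sum {w : R⟦X⟧} (hw : constantCoeff w = 0) (f : R⟦X⟧) (n : ℕ) :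
    coeff n (f.subst w) = ∑ m ∈ range (n + 1), coeff m f * coeff n (w ^ m) := by
  rw [coeff_subst' (HasSubst.of_constantCoeff_zero' hw)]
  apply finsum_eq_sum_of_support_subset
  intro m hm
  rw [coe_range, Set.mem_Iio, Nat.lt_succ_iff]
  by_contra! h
  have hX : X ^ m ∣ w ^ m := pow_dvd_pow_of_dvd (X_dvd_iff.mpr hw) m
  exact hm (show coeff m f • coeff n (w ^ m) = 0 by rw [X_pow_dvd_iff.mp hX n h, smul_zero])

theorem coeff_X_mul_derivative (f : R⟦X⟧) (n : ℕ) :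
    coeff n (X * d⁄dX R f) = n * coeff n f := by
  cases n with
  | zero => simp
  | succ n => rw [coeff_succ_X_mul, coeff_derivative]; push_cast; ring

theorem nsmul_derivative_pow_mul_pow (φ : R⟦X⟧) (j N : ℕ) :
    (j + N) • (d⁄dX R (φ ^ j) * φ ^ N) = j • d⁄dX R (φ ^ (j + N)) := by
  rcases j with _ | j
  · simp
  · rw [derivative_pow, derivative_pow, Nat.add_sub_cancel, show j + 1 + N - 1 = j + N by omega,
      pow_add, nsmul_eq_mul, nsmul_eq_mul]
    push_cast
    ring

theorem coeff_one_add_X_pow (m n : ℕ) : coeff n ((1 + X : R⟦X⟧) ^ m) = m.choose n := by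
  rw [show (1 + X : R⟦X⟧) ^ m = ((1 + Polynomial.X) ^ m : Polynomial R) by simp,
    Polynomial.coeff_coe, Polynomial.coeff_one_add_X_pow]

end CommRing

/-- The induction runs on `n`: expanding `wʲ = Xʲ (φʲ)(w)` expresses `[Xⁿ] wʲ` through the
coefficients `[X^(n-j)] wᵐ`, which are known by induction, and the resulting convolution is the
coefficient of `X (φʲ)' φ^(n-j) = (j / n) X (φⁿ)'`. -/
theorem lagrange_inversion {K : Type*} [Field K] [CharZero K] {w φ : K⟦X⟧}
    (hw : w = X * φ.subst w) {j n : ℕ} (hjn : j ≤ n) :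
    (n : K) * coeff n (w ^ j) = j * coeff (n - j) (φ ^ n) := by
  have hw0 : constantCoeff w = 0 := by rw [hw]; simp
  have hsub := HasSubst.of_constantCoeff_zero' hw0
  induction n using Nat.strong_induction_on generalizing j with | _ n ih
  rcases Nat.eq_zero_or_pos j with rfl | hj
  · simp [coeff_one]
  obtain ⟨N, rfl⟩ := Nat.exists_eq_add_of_le hjn
  have hsplit : coeff (j + N) (w ^ j) =
      ∑ m ∈ range (N + 1), coeff m (φ ^ j) * coeff N (w ^ m) := by
    conv_lhs => rw [hw, mul_pow, ← subst_pow hsub, coeff_X_pow_mul', if_pos hjn,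
      Nat.add_sub_cancel_left]
    exact coeff_subst_eq_sum hw0 _ _
  rw [hsplit, Nat.add_sub_cancel_left]
  rcases Nat.eq_zero_or_pos N with rfl | hN
  · simp
  have hconv : (N : K) * ∑ m ∈ range (N + 1), coeff m (φ ^ j) * coeff N (w ^ m) =
      coeff N (X * d⁄dX K (φ ^ j) * φ ^ N) := by
    rw [coeff_mul, Nat.sum_antidiagonal_eq_sum_range_succ_mk, mul_sum]
    refine sum_congr rfl fun m hm => ?_
    rw [coeff_X_mul_derivative]
    rcases Nat.eq_zero_or_pos m with rfl | hm0
    · simp [coeff_one, hN.ne']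
    · rw [mul_left_comm, ih N (by omega) (by simpa [Nat.lt_succ_iff] using hm)]
      ring
  have hderiv := congrArg (fun f => coeff N (X * f)) (nsmul_derivative_pow_mul_pow φ j N)
  simp only [mul_smul_comm, map_nsmul, ← mul_assoc, coeff_X_mul_derivative] at hderiv
  apply mul_left_cancel₀ (Nat.cast_ne_zero.mpr hN.ne' : (N : K) ≠ 0)
  push_cast at hderiv ⊢
  linear_combination (↑j + ↑N) * hconv + hderiv

theorem expand_card_zmod {p : ℕ} [hp : Fact p.Prime] (f : (ZMod p)⟦X⟧) :
    expand p hp.out.ne_zero f = f ^ p := by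
  ext n
  rw [coeff_expand, ← coeff_coe_trunc_of_lt n.lt_succ_self, ← trunc_trunc_pow,
    coeff_coe_trunc_of_lt n.lt_succ_self, ← Polynomial.coe_pow, Polynomial.coeff_coe,
    ← ZMod.expand_card, Polynomial.coeff_expand hp.out.pos]
  split_ifs
  · rw [coeff_trunc, if_pos (Nat.lt_succ_of_le (Nat.div_le_self n p))]
  · rfl

theorem eq_of_cube_add_sq_eq {R : Type*} [CommRing R] [IsDomain R] (h2 : (2 : R) ≠ 0)
    {f g : R⟦X⟧} (hf : X ∣ f) (hg : X ∣ g) (hf1 : coeff 1 f = 1) (hg1 : coeff 1 g = 1)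
    (h : f ^ 3 + f ^ 2 = g ^ 3 + g ^ 2) : f = g := by
  have hfactor : (f - g) * (f ^ 2 + f * g + g ^ 2 + f + g) = 0 := by linear_combination h
  refine sub_eq_zero.mp ((mul_eq_zero.mp hfactor).resolve_right fun h0 => h2 ?_)
  obtain ⟨f', rfl⟩ := hf
  obtain ⟨g', rfl⟩ := hg
  rw [coeff_succ_X_mul, coeff_zero_eq_constantCoeff_apply] at hf1 hg1
  have := congrArg (coeff 1) h0
  rw [show (X * f') ^ 2 + X * f' * (X * g') + (X * g') ^ 2 + X * f' + X * g' =
      X * (X * (f' ^ 2 + f' * g' + g' ^ 2) + f' + g') by ring, coeff_succ_X_mul,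
    coeff_zero_eq_constantCoeff_apply] at this
  simp only [map_add, map_mul, constantCoeff_X, zero_mul, zero_add, hf1, hg1, map_zero] at this
  linear_combination this

end PowerSeries

section SumXPowPow

variable {p : ℕ}

open Classical in
noncomputable def sumXPowPow (p : ℕ) : (ZMod p)⟦X⟧ :=
  mk fun n => if n ∈ Set.range (p ^ ·) then 1 else 0

open Classical in
theorem coeff_sumXPowPow (n : ℕ) :
    coeff n (sumXPowPow p) = if n ∈ Set.range (p ^ ·) then 1 else 0 :=
  coeff_mk _ _

open Classical in
theorem coeff_sumXPowPow_sq (n : ℕ) :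
    coeff n (sumXPowPow p ^ 2) =
      (#{x ∈ antidiagonal n | x.1 ∈ Set.range (p ^ ·) ∧ x.2 ∈ Set.range (p ^ ·)} : ZMod p) := by
  simp only [sq, coeff_mul, coeff_sumXPowPow, ite_zero_mul_ite_zero, mul_one, sum_boole]

theorem coeff_sumXPowPow_sq_eq_zero {n : ℕ} (h : ∀ a b, n ≠ p ^ a + p ^ b) :
    coeff n (sumXPowPow p ^ 2) = 0 := by
  classical
  rw [coeff_sumXPowPow_sq, card_eq_zero.mpr (filter_eq_empty_iff.mpr ?_), Nat.cast_zero]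
  rintro ⟨x, y⟩ hxy ⟨⟨c, rfl⟩, ⟨d, rfl⟩⟩
  exact h c d (HasAntidiagonal.mem_antidiagonal.mp hxy).symm

theorem coeff_sumXPowPow_add_sq_eq_zero {n : ℕ} (h1 : ¬ ∃ m, n = p ^ m ∨ n = 2 * p ^ m)
    (h2 : ¬ ∃ a b, b < a ∧ n = p ^ a + p ^ b) :
    coeff n (sumXPowPow p + sumXPowPow p ^ 2) = 0 := by
  rw [map_add, coeff_sumXPowPow, if_neg fun ⟨m, hm⟩ => h1 ⟨m, Or.inl hm.symm⟩,
    coeff_sumXPowPow_sq_eq_zero, add_zero]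
  intro a b hab
  rcases lt_trichotomy a b with h | rfl | h
  · exact h2 ⟨b, a, h, hab.trans (add_comm _ _)⟩
  · exact h1 ⟨a, Or.inr (hab.trans (two_mul _).symm)⟩
  · exact h2 ⟨a, b, h, hab⟩

variable [hp : Fact p.Prime]

theorem sumXPowPow_pow_eq : sumXPowPow p ^ p = sumXPowPow p - X := by
  classical
  ext n
  rw [← expand_card_zmod, coeff_expand, map_sub, coeff_X, coeff_sumXPowPow]
  by_cases hdvd : p ∣ n
  · obtain ⟨m, rfl⟩ := hdvd
    have hne : p * m ≠ 1 := fun h => hp.out.ne_one (Nat.eq_one_of_mul_eq_one_right h)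
    rw [if_pos (dvd_mul_right p m), Nat.mul_div_cancel_left m hp.out.pos, coeff_sumXPowPow,
      if_neg hne, sub_zero]
    exact if_congr (mul_mem_range_pow_iff hp.out.one_lt).symm rfl rfl
  · simp [hdvd, coeff_sumXPowPow, mem_range_pow_iff_of_not_dvd hdvd]

theorem coeff_pow_add_pow_sumXPowPow_sq (hp2 : p ≠ 2) (a b : ℕ) :
    coeff (p ^ a + p ^ b) (sumXPowPow p ^ 2) = if a = b then 1 else 2 := by
  classical
  have hpairs : {x ∈ antidiagonal (p ^ a + p ^ b) |
      x.1 ∈ Set.range (p ^ ·) ∧ x.2 ∈ Set.range (p ^ ·)} = {(p ^ a, p ^ b), (p ^ b, p ^ a)} := by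
    ext ⟨x, y⟩
    simp only [mem_filter, HasAntidiagonal.mem_antidiagonal, Set.mem_range, mem_insert,
      mem_singleton, Prod.mk.injEq]
    constructor
    · rintro ⟨hxy, ⟨c, rfl⟩, ⟨d, rfl⟩⟩
      rcases (pow_add_pow_eq_pow_add_pow_iff hp2).mp hxy with ⟨rfl, rfl⟩ | ⟨rfl, rfl⟩ <;> simp
    · rintro (⟨rfl, rfl⟩ | ⟨rfl, rfl⟩)
      · exact ⟨rfl, ⟨a, rfl⟩, ⟨b, rfl⟩⟩
      · exact ⟨add_comm _ _, ⟨b, rfl⟩, ⟨a, rfl⟩⟩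
  rw [coeff_sumXPowPow_sq, hpairs]
  split_ifs with hab
  · subst hab
    simp
  · have hne : (p ^ a, p ^ b) ≠ (p ^ b, p ^ a) := fun h =>
      hab (Nat.pow_right_injective hp.out.two_le (Prod.mk.inj h).1)
    rw [card_pair hne]
    rfl

theorem coeff_sumXPowPow_add_sq_eq_one (hp2 : p ≠ 2) {n : ℕ}
    (h : ∃ m, n = p ^ m ∨ n = 2 * p ^ m) : coeff n (sumXPowPow p + sumXPowPow p ^ 2) = 1 := by
  obtain ⟨m, rfl | rfl⟩ := h
  · rw [map_add, coeff_sumXPowPow, if_pos ⟨m, rfl⟩,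
      coeff_sumXPowPow_sq_eq_zero (pow_ne_pow_add_pow (hp.out.odd_of_ne_two hp2) m), add_zero]
  · rw [map_add, coeff_sumXPowPow, if_neg, two_mul, coeff_pow_add_pow_sumXPowPow_sq hp2,
      if_pos rfl, zero_add]
    rintro ⟨k, hk⟩
    exact pow_ne_pow_add_pow (hp.out.odd_of_ne_two hp2) k m m (hk.trans (two_mul _))

theorem coeff_sumXPowPow_add_sq_eq_two (hp2 : p ≠ 2) {n : ℕ}
    (h : ∃ a b, b < a ∧ n = p ^ a + p ^ b) : coeff n (sumXPowPow p + sumXPowPow p ^ 2) = 2 := by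
  obtain ⟨a, b, hba, rfl⟩ := h
  rw [map_add, coeff_sumXPowPow, if_neg fun ⟨k, hk⟩ => pow_ne_pow_add_pow (hp.out.odd_of_ne_two hp2) k a b hk,
    coeff_pow_add_pow_sumXPowPow_sq hp2, if_neg hba.ne', zero_add]

end SumXPowPow

theorem three_eq_zero : (3 : (ZMod 3)⟦X⟧) = 0 := by
  rw [← map_ofNat C 3, show (OfNat.ofNat 3 : ZMod 3) = 0 from rfl, map_zero]

theorem sumXPowPow_add_sq_cube_add_sq :
    (sumXPowPow 3 + sumXPowPow 3 ^ 2) ^ 3 + (sumXPowPow 3 + sumXPowPow 3 ^ 2) ^ 2 = X ^ 2 := by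
  set G := sumXPowPow 3
  -- mod 3 the left side is `G⁶ + G⁴ + G²`, and `G³ = G - X`
  linear_combination (G ^ 3 + 2 * G - X) * sumXPowPow_pow_eq (p := 3) +
    (G ^ 5 + G ^ 4 + G ^ 3 + G ^ 2 - X * G) * three_eq_zero

section NoncrossingSeries

variable {R : Type*} [CommRing R]

/-- `X (1 + w) = ∑ Ncn n Xⁿ`: this functional equation is the Flajolet–Noy equation
`F³ + F² - 3 X F + 2 X² = 0` for `F = X (1 + w)`. -/
def IsNoncrossingSeries (w : R⟦X⟧) : Prop :=
  X ∣ w ∧ X * (1 + w) ^ 3 + w ^ 2 = w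

theorem IsNoncrossingSeries.map {S : Type*} [CommRing S] {w : R⟦X⟧} (hw : IsNoncrossingSeries w)
    (φ : R →+* S) : IsNoncrossingSeries (map φ w) := by
  refine ⟨by simpa using map_dvd (PowerSeries.map φ) hw.1, ?_⟩
  simpa using congrArg (PowerSeries.map φ) hw.2

theorem exists_isNoncrossingSeries : ∃ w : ℤ⟦X⟧, IsNoncrossingSeries w := by
  refine exists_fixedPoint_of_contracting (fun f => X * (1 + f) ^ 3 + f ^ 2)
    (fun f hf => dvd_add (dvd_mul_right X _) (dvd_pow hf two_ne_zero))
    (fun f g k hf hg hfg => ?_)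
  rw [show X * (1 + f) ^ 3 + f ^ 2 - (X * (1 + g) ^ 3 + g ^ 2) =
      (f - g) * (X * ((1 + f) ^ 2 + (1 + f) * (1 + g) + (1 + g) ^ 2) + (f + g)) by ring, pow_succ]
  exact mul_dvd_mul hfg (dvd_add (dvd_mul_right X _) (dvd_add hf hg))

theorem IsNoncrossingSeries.X_mul_subst_eq_self {w : R⟦X⟧} (hw : IsNoncrossingSeries w) :
    X * ((1 + X : R⟦X⟧) ^ 3 * PowerSeries.mk 1).subst w = w := by
  have hs := HasSubst.of_constantCoeff_zero' (X_dvd_iff.mp hw.1)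
  have hU : (1 - w) * (PowerSeries.mk 1 : R⟦X⟧).subst w = 1 := by
    have := congrArg (substAlgHom hs (R := R)) (mk_one_mul_one_sub_eq_one R)
    rw [map_mul, map_sub, map_one, substAlgHom_X, coe_substAlgHom] at this
    rw [mul_comm, this]
  rw [← coe_substAlgHom hs, map_mul, map_pow, map_add, map_one, substAlgHom_X, coe_substAlgHom]
  linear_combination (PowerSeries.mk 1 : R⟦X⟧).subst w * hw.2 + w * hU

theorem IsNoncrossingSeries.succ_mul_coeff_succ {K : Type*} [Field K] [CharZero K] {w : K⟦X⟧}
    (hw : IsNoncrossingSeries w) (k : ℕ) :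
    (k + 1 : K) * coeff (k + 1) w =
      ∑ x ∈ antidiagonal k, ((3 * (k + 1)).choose x.1 * (k + x.2).choose k : K) := by
  have h := lagrange_inversion hw.X_mul_subst_eq_self.symm (j := 1) (n := k + 1) (by omega)
  rw [pow_one, Nat.cast_one, one_mul, Nat.add_sub_cancel, mul_pow, ← pow_mul,
    mk_one_pow_eq_mk_choose_add, coeff_mul] at h
  push_cast at h
  simp only [h, coeff_one_add_X_pow, coeff_mk]

theorem sum_Icc_choose_mul_choose {n : ℕ} (hn : 2 ≤ n) :
    ∑ i ∈ Icc (n - 1) (2 * n - 3), (3 * n - 3).choose (n + i) * (i - 1).choose (i + 1 - n) =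
      ∑ x ∈ antidiagonal (n - 2), (3 * n - 3).choose x.1 * (n - 2 + x.2).choose (n - 2) := by
  refine sum_nbij' (fun i => (2 * n - 3 - i, i + 1 - n)) (fun x => x.2 + n - 1) ?_ ?_ ?_ ?_ ?_
  all_goals simp only [mem_Icc, HasAntidiagonal.mem_antidiagonal, Prod.ext_iff]
  · intro i hi; omega
  · intro x hx; omega
  · intro i hi; omega
  · intro x hx; omega
  · intro i hi
    rw [Nat.choose_symm_of_eq_add (show 3 * n - 3 = n + i + (2 * n - 3 - i) by omega),
      Nat.choose_symm_of_eq_add (show i - 1 = i + 1 - n + (n - 2) by omega),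
      show n - 2 + (i + 1 - n) = i - 1 by omega]

theorem IsNoncrossingSeries.Ncn_eq_coeff {w : ℚ⟦X⟧} (hw : IsNoncrossingSeries w) (n : ℕ) :
    Ncn n = coeff n (X * (1 + w)) := by
  rcases lt_trichotomy n 1 with hn0 | rfl | hn2
  · obtain rfl : n = 0 := by omega
    simp [Ncn]
  · simp [Ncn, coeff_succ_X_mul, X_dvd_iff.mp hw.1]
  have hsum := congrArg (Nat.cast : ℕ → ℚ) (sum_Icc_choose_mul_choose hn2)
  push_cast at hsum
  have hk := hw.succ_mul_coeff_succ (n - 2)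
  rw [show n - 2 + 1 = n - 1 by omega, show 3 * (n - 1) = 3 * n - 3 by omega,
    Nat.cast_sub hn2, Nat.cast_two, show (n : ℚ) - 2 + 1 = n - 1 by ring] at hk
  have hn1 : (n : ℚ) - 1 ≠ 0 := sub_ne_zero.mpr (Nat.one_lt_cast.mpr hn2).ne'
  conv_rhs => rw [← Nat.sub_add_cancel hn2.le]
  rw [Ncn, if_neg hn2.ne', hsum, ← hk, coeff_succ_X_mul, map_add, coeff_one,
    if_neg (by omega), zero_add, one_div, inv_mul_cancel_left₀ hn1]

theorem IsNoncrossingSeries.X_mul_one_add_eq_sumXPowPow {w : (ZMod 3)⟦X⟧}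
    (hw : IsNoncrossingSeries w) : X * (1 + w) = sumXPowPow 3 + sumXPowPow 3 ^ 2 := by
  have hF : (X * (1 + w)) ^ 3 + (X * (1 + w)) ^ 2 = X ^ 2 := by
    linear_combination X ^ 2 * hw.2 + X ^ 2 * w * three_eq_zero
  have hG0 : X ∣ sumXPowPow 3 + sumXPowPow 3 ^ 2 := by
    rw [X_dvd_iff, ← coeff_zero_eq_constantCoeff_apply]
    refine coeff_sumXPowPow_add_sq_eq_zero ?_ ?_
    · rintro ⟨m, h | h⟩ <;> exact absurd h.symm (by positivity)
    · rintro ⟨a, b, -, h⟩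
      exact absurd h.symm (by positivity)
  refine eq_of_cube_add_sq_eq (by decide) (dvd_mul_right X _) hG0
    (by simp [coeff_succ_X_mul, X_dvd_iff.mp hw.1])
    (coeff_sumXPowPow_add_sq_eq_one (by decide) ⟨0, Or.inl rfl⟩) ?_
  rw [hF, sumXPowPow_add_sq_cube_add_sq]

end NoncrossingSeries

theorem Int.exists_eq_mul_add_of_cast_eq {m : ℕ} {c v : ℤ} (h : (c : ZMod m) = v) :
    ∃ k, c = m * k + v := by
  obtain ⟨k, hk⟩ := (ZMod.intCast_eq_intCast_iff_dvd_sub c v m).mp h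
  exact ⟨-k, by linarith⟩

theorem Ncn_mod_three_general (n : ℕ) :
    ((∃ m : ℕ, n = 3 ^ m ∨ n = 2 * 3 ^ m) → ∃ k : ℤ, Ncn n = 3 * k + 1) ∧
    ((∃ a b : ℕ, b < a ∧ n = 3 ^ a + 3 ^ b) → ∃ k : ℤ, Ncn n = 3 * k + 2) ∧
    ((¬ (∃ m : ℕ, n = 3 ^ m ∨ n = 2 * 3 ^ m) ∧
      ¬ (∃ a b : ℕ, b < a ∧ n = 3 ^ a + 3 ^ b)) → ∃ k : ℤ, Ncn n = 3 * k) := by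
  obtain ⟨w, hw⟩ := exists_isNoncrossingSeries
  set c := coeff n (X * (1 + w))
  have hcoeff (S : Type) [CommRing S] (φ : ℤ →+* S) : coeff n (X * (1 + map φ w)) = φ c := by
    rw [show X * (1 + map φ w) = map φ (X * (1 + w)) by simp, coeff_map]
  have hNcn : Ncn n = c := by
    rw [(hw.map (Int.castRingHom ℚ)).Ncn_eq_coeff n, hcoeff, eq_intCast]
  have hres : ∀ v : ℤ, coeff n (sumXPowPow 3 + sumXPowPow 3 ^ 2) = (v : ZMod 3) →
      ∃ k : ℤ, Ncn n = 3 * k + v := fun v hv => by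
    rw [← (hw.map (Int.castRingHom (ZMod 3))).X_mul_one_add_eq_sumXPowPow, hcoeff,
      eq_intCast] at hv
    obtain ⟨k, hk⟩ := Int.exists_eq_mul_add_of_cast_eq hv
    exact ⟨k, by rw [hNcn, hk]; push_cast; ring⟩
  refine ⟨fun h => ?_, fun h => ?_, fun h => ?_⟩
  · simpa using hres 1 (by rw [coeff_sumXPowPow_add_sq_eq_one (by decide) h, Int.cast_one])
  · simpa using hres 2 (by rw [coeff_sumXPowPow_add_sq_eq_two (by decide) h, Int.cast_two])
  · simpa using hres 0 (by rw [coeff_sumXPowPow_add_sq_eq_zero h.1 h.2, Int.cast_zero])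

/-- The Deutsch–Sagan congruence for connected noncrossing graphs. -/
theorem Ncn_mod_three (n : ℕ) (hn : 1 ≤ n) :
    ((∃ m : ℕ, n = 3 ^ m ∨ n = 2 * 3 ^ m) → ∃ k : ℤ, Ncn n = 3 * k + 1) ∧
    ((∃ a b : ℕ, b < a ∧ n = 3 ^ a + 3 ^ b) → ∃ k : ℤ, Ncn n = 3 * k + 2) ∧
    ((¬ (∃ m : ℕ, n = 3 ^ m ∨ n = 2 * 3 ^ m) ∧
      ¬ (∃ a b : ℕ, b < a ∧ n = 3 ^ a + 3 ^ b)) → ∃ k : ℤ, Ncn n = 3 * k) :=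
  Ncn_mod_three_general n
end

section
/- There is a unique formal power series α over ℤ with constant term 0 satisfying α - 3α² + 2α³ = X, and in the ring of formal power series over ℤ/3ℤ the reduction of α modulo 3 equals Σ_{m≥0} X^{3^m}, i.e., the coefficient of X^k in α is congruent modulo 3 to 1 if k is a power of 3 and to 0 otherwise. -/
/-!
The equation reads `α = Φ α` with `Φ a = X + 3a² - 2a³`. Since
`Φ a - Φ b = (a - b) (3(a + b) - 2(a² + ab + b²))` and the second factor lies in `(X)`, `Φ` is an
`X`-adic contraction on `(X)`; by `X`-adic completeness of `R⟦X⟧` it has a unique fixed point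
there, the limit of `Φ^[k] 0`. In characteristic 3, `Φ a = X + a³`, so by the Frobenius
`Φ^[k] 0 = Σ_{m < k} X^(3^m)`, and the fixed point is `Σ_m X^(3^m)`. Reduction mod 3 commutes
with `Φ`, so it sends the integral solution to this fixed point.
-/

open PowerSeries Function
open scoped Classical

namespace PowerSeries

variable {R : Type*}

instance charP [Semiring R] (p : ℕ) [CharP R p] : CharP R⟦X⟧ p :=
  charP_of_injective_ringHom C_injective p

variable [CommRing R]

theorem sModEq_span_X_pow_iff {n : ℕ} {a b : R⟦X⟧} :
    a ≡ b [SMOD (Ideal.span {(X : R⟦X⟧)} ^ n • ⊤ : Submodule R⟦X⟧ R⟦X⟧)] ↔ X ^ n ∣ a - b := by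
  rw [SModEq.sub_mem, smul_eq_mul, Ideal.mul_top, Ideal.span_singleton_pow,
    Ideal.mem_span_singleton]

theorem eq_of_forall_X_pow_dvd_sub {a b : R⟦X⟧} (h : ∀ n, X ^ n ∣ a - b) : a = b := by
  refine sub_eq_zero.1 <| IsHausdorff.haus (I := Ideal.span {(X : R⟦X⟧)}) inferInstance _ ?_
  simpa only [sModEq_span_X_pow_iff, sub_zero] using h

theorem exists_forall_X_pow_dvd_sub {s : ℕ → R⟦X⟧}
    (hs : ∀ {m n}, m ≤ n → X ^ m ∣ s m - s n) : ∃ L, ∀ n, X ^ n ∣ s n - L := by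
  simp_rw [← sModEq_span_X_pow_iff] at hs ⊢
  exact IsPrecomplete.prec inferInstance hs

structure IsXAdicContraction (Φ : R⟦X⟧ → R⟦X⟧) : Prop where
  X_dvd_apply {a : R⟦X⟧} : X ∣ a → X ∣ Φ a
  X_pow_succ_dvd_apply_sub {a b : R⟦X⟧} {n : ℕ} :
    X ∣ a → X ∣ b → X ^ n ∣ a - b → X ^ (n + 1) ∣ Φ a - Φ b

namespace IsXAdicContraction

variable {Φ : R⟦X⟧ → R⟦X⟧} {a b : R⟦X⟧}

theorem X_dvd_iterate (hΦ : IsXAdicContraction Φ) (ha : X ∣ a) (k : ℕ) : X ∣ Φ^[k] a := by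
  induction k with
  | zero => exact ha
  | succ k ih => exact iterate_succ_apply' Φ k a ▸ hΦ.X_dvd_apply ih

theorem X_pow_dvd_iterate_sub (hΦ : IsXAdicContraction Φ) (ha : X ∣ a) (hb : X ∣ b) (k : ℕ) :
    X ^ k ∣ Φ^[k] a - Φ^[k] b := by
  induction k with
  | zero => simp
  | succ k ih =>
    rw [iterate_succ_apply', iterate_succ_apply']
    exact hΦ.X_pow_succ_dvd_apply_sub (hΦ.X_dvd_iterate ha k) (hΦ.X_dvd_iterate hb k) ih

theorem X_pow_dvd_sub_iterate (hΦ : IsXAdicContraction Φ) (ha : X ∣ a) (hfix : IsFixedPt Φ a)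
    (hb : X ∣ b) (k : ℕ) : X ^ k ∣ a - Φ^[k] b := by
  simpa only [(hfix.iterate k).eq] using hΦ.X_pow_dvd_iterate_sub ha hb k

theorem eq_of_isFixedPt (hΦ : IsXAdicContraction Φ) (ha : X ∣ a) (hb : X ∣ b)
    (hfa : IsFixedPt Φ a) (hfb : IsFixedPt Φ b) : a = b :=
  eq_of_forall_X_pow_dvd_sub fun k => (hfb.iterate k).eq ▸ hΦ.X_pow_dvd_sub_iterate ha hfa hb k

theorem exists_isFixedPt (hΦ : IsXAdicContraction Φ) : ∃ a, X ∣ a ∧ IsFixedPt Φ a := by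
  have hcauchy {m n : ℕ} (hmn : m ≤ n) : X ^ m ∣ Φ^[m] 0 - Φ^[n] 0 := by
    obtain ⟨j, rfl⟩ := Nat.exists_eq_add_of_le hmn
    rw [iterate_add_apply]
    exact hΦ.X_pow_dvd_iterate_sub (dvd_zero X) (hΦ.X_dvd_iterate (dvd_zero X) j) m
  obtain ⟨L, hL⟩ := exists_forall_X_pow_dvd_sub hcauchy
  have hLX : X ∣ L :=
    (dvd_sub_right (hΦ.X_dvd_iterate (dvd_zero X) 1)).1 (pow_one (X : R⟦X⟧) ▸ hL 1)
  refine ⟨L, hLX, eq_of_forall_X_pow_dvd_sub fun k => ?_⟩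
  have hstep : X ^ (k + 1) ∣ Φ L - Φ^[k + 1] 0 := by
    rw [iterate_succ_apply']
    exact hΦ.X_pow_succ_dvd_apply_sub hLX (hΦ.X_dvd_iterate (dvd_zero X) k)
      (dvd_sub_comm.1 (hL k))
  have := hstep.add (hL (k + 1))
  rw [sub_add_sub_cancel] at this
  exact (pow_dvd_pow X k.le_succ).trans this

end IsXAdicContraction

noncomputable def cubicStep (a : R⟦X⟧) : R⟦X⟧ := X + 3 * a ^ 2 - 2 * a ^ 3

theorem isFixedPt_cubicStep_iff {a : R⟦X⟧} :
    IsFixedPt cubicStep a ↔ a - 3 * a ^ 2 + 2 * a ^ 3 = X := by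
  unfold IsFixedPt cubicStep
  constructor <;> intro h <;> linear_combination -h

theorem isXAdicContraction_cubicStep : IsXAdicContraction (cubicStep : R⟦X⟧ → R⟦X⟧) where
  X_dvd_apply {a} ha := by
    unfold cubicStep
    exact ((dvd_refl X).add ((dvd_pow ha two_ne_zero).mul_left 3)).sub
      ((dvd_pow ha three_ne_zero).mul_left 2)
  X_pow_succ_dvd_apply_sub {a b n} ha hb hab := by
    have hfactor : cubicStep a - cubicStep b =
        (a - b) * (3 * (a + b) - 2 * (a ^ 2 + a * b + b ^ 2)) := by
      unfold cubicStep; ring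
    have hX : X ∣ 3 * (a + b) - 2 * (a ^ 2 + a * b + b ^ 2) :=
      ((ha.add hb).mul_left 3).sub
        ((((dvd_pow ha two_ne_zero).add (ha.mul_right b)).add (dvd_pow hb two_ne_zero)).mul_left 2)
    rw [hfactor, pow_succ]
    exact mul_dvd_mul hab hX

theorem map_cubicStep {S : Type*} [CommRing S] (f : R →+* S) (a : R⟦X⟧) :
    map f (cubicStep a) = cubicStep (map f a) := by
  simp [cubicStep, map_ofNat]

theorem cubicStep_eq_of_charP_three [CharP R 3] (a : R⟦X⟧) : cubicStep a = X + a ^ 3 := by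
  have h3 : (3 : R⟦X⟧) = 0 := CharP.ofNat_eq_zero _ 3
  unfold cubicStep
  linear_combination (a ^ 2 - a ^ 3) * h3

theorem cubicStep_iterate_zero [CharP R 3] (k : ℕ) :
    cubicStep^[k] (0 : R⟦X⟧) = ∑ m ∈ Finset.range k, X ^ 3 ^ m := by
  induction k with
  | zero => simp
  | succ k ih =>
    rw [iterate_succ_apply', ih, cubicStep_eq_of_charP_three, sum_pow_char, Finset.sum_range_succ']
    simp only [← pow_mul, ← pow_succ, pow_zero, pow_one, add_comm]

theorem X_pow_dvd_sum_X_pow_three_pow_sub (k : ℕ) :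
    X ^ k ∣ ∑ m ∈ Finset.range k, X ^ 3 ^ m -
      (mk fun n => if ∃ m : ℕ, n = 3 ^ m then 1 else 0 : R⟦X⟧) := by
  rw [X_pow_dvd_iff]
  intro n hn
  rw [map_sub, coeff_mk, map_sum]
  simp only [coeff_X_pow]
  by_cases h : ∃ m : ℕ, n = 3 ^ m
  · obtain ⟨m, rfl⟩ := h
    have hm : m ∈ Finset.range k := Finset.mem_range.2 ((Nat.lt_pow_self (by norm_num)).trans hn)
    rw [Finset.sum_eq_single_of_mem m hm fun j _ hj => if_neg fun h =>
      hj (Nat.pow_right_injective (by norm_num : 2 ≤ 3) h).symm, if_pos rfl, if_pos ⟨m, rfl⟩,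
      sub_self]
  · rw [Finset.sum_eq_zero fun m _ => if_neg fun hm => h ⟨m, hm⟩, if_neg h, sub_self]

theorem eq_sum_X_pow_three_pow_of_isFixedPt [CharP R 3] {a : R⟦X⟧} (ha : X ∣ a)
    (hfix : IsFixedPt cubicStep a) : a = mk fun n => if ∃ m : ℕ, n = 3 ^ m then 1 else 0 := by
  refine eq_of_forall_X_pow_dvd_sub fun k => ?_
  have := (isXAdicContraction_cubicStep.X_pow_dvd_sub_iterate ha hfix (dvd_zero X) k).add
    (X_pow_dvd_sum_X_pow_three_pow_sub k)
  rwa [cubicStep_iterate_zero, sub_add_sub_cancel] at this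

end PowerSeries

/-- There is a unique power series `α` over `ℤ` with zero constant term satisfying
`α - 3α² + 2α³ = X`, and modulo 3 it equals `Σ_{m ≥ 0} X^(3^m)`. -/
theorem alpha_exists_unique_and_mod_three :
    (∃! α : PowerSeries ℤ, PowerSeries.constantCoeff α = 0 ∧
        α - 3 * α ^ 2 + 2 * α ^ 3 = PowerSeries.X) ∧
    (∀ α : PowerSeries ℤ, PowerSeries.constantCoeff α = 0 →
        α - 3 * α ^ 2 + 2 * α ^ 3 = PowerSeries.X →
      PowerSeries.map (Int.castRingHom (ZMod 3)) α
        = PowerSeries.mk fun k => if ∃ m : ℕ, k = 3 ^ m then 1 else 0) := by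
  have hΦ : IsXAdicContraction (cubicStep : ℤ⟦X⟧ → ℤ⟦X⟧) := isXAdicContraction_cubicStep
  simp only [← X_dvd_iff, ← isFixedPt_cubicStep_iff]
  refine ⟨?_, fun α hX hfix => ?_⟩
  · obtain ⟨α, hX, hfix⟩ := hΦ.exists_isFixedPt
    exact ⟨α, ⟨hX, hfix⟩, fun β ⟨hβX, hβfix⟩ => hΦ.eq_of_isFixedPt hβX hX hβfix hfix⟩
  · have hXmod : X ∣ map (Int.castRingHom (ZMod 3)) α := by
      simpa only [map_X] using map_dvd (map (Int.castRingHom (ZMod 3))) hX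
    exact eq_sum_X_pow_three_pow_of_isFixedPt hXmod
      ((map_cubicStep _ α).symm.trans (congrArg _ hfix))
end

section
/- For every integer n ≥ 0 and every rational number a, Σ_{k=0}^{n} C(2n+a, n-k)·C(a+k-1, k) = 2^{2n}·C(a/2 + n - 1/2, n), where all binomial coefficients are generalized binomial coefficients with rational upper argument. -/
/-!
Both sides satisfy `f (n + 1) = 2 (2n + 1 + a) / (n + 1) · f n` and equal `1` at `n = 0`.
On the right this is the absorption identity `C(q + 1, n + 1) = C(q, n) (q + 1) / (n + 1)`.
On the left it is Zeilberger's creative telescoping: the summand at `n + 1` is that multiple of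
the summand at `n` plus the forward difference in `k` of the certificate
`-k / (n + 1) · C(2n + a + 1, n + 1 - k) · C(a + k - 1, k)`, which telescopes over `k ≤ n`
to minus the one extra term `k = n + 1`.
-/

open Finset

/-- Generalized binomial coefficient `C(q, k) = q(q-1)⋯(q-k+1)/k!` for rational `q`. -/
noncomputable def qchoose (q : ℚ) (k : ℕ) : ℚ :=
  (∏ j ∈ Finset.range k, (q - j)) / (k.factorial : ℚ)

lemma qchoose_zero (q : ℚ) : qchoose q 0 = 1 := by
  simp [qchoose]

lemma qchoose_succ (q : ℚ) (k : ℕ) :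
    qchoose q (k + 1) = qchoose q k * (q - k) / (k + 1) := by
  rw [qchoose, qchoose, prod_range_succ, Nat.factorial_succ]
  push_cast
  field_simp

lemma qchoose_add_one_succ (q : ℚ) (k : ℕ) :
    qchoose (q + 1) (k + 1) = qchoose q k * (q + 1) / (k + 1) := by
  rw [qchoose, qchoose, prod_range_succ', Nat.factorial_succ]
  push_cast
  simp_rw [add_sub_add_right_eq_sub, sub_zero]
  field_simp

lemma qchoose_mul_add_one (q : ℚ) (k : ℕ) :
    qchoose q k * (q + 1) = qchoose (q + 1) k * (q + 1 - k) := by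
  have h := (qchoose_add_one_succ q k).symm.trans (qchoose_succ (q + 1) k)
  field_simp at h
  exact h

noncomputable def kummerSum (n : ℕ) (a : ℚ) : ℚ :=
  ∑ k ∈ range (n + 1), qchoose (2 * n + a) (n - k) * qchoose (a + k - 1) k

noncomputable def kummerCert (n : ℕ) (a : ℚ) (k : ℕ) : ℚ :=
  -(k / (n + 1)) * qchoose (2 * n + a + 1) (n + 1 - k) * qchoose (a + k - 1) k

lemma kummer_summand_succ (a : ℚ) {n k : ℕ} (hk : k ≤ n) :
    qchoose (2 * (n + 1 : ℕ) + a) (n + 1 - k) * qchoose (a + k - 1) k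
      = 2 * (2 * n + 1 + a) / (n + 1) * (qchoose (2 * n + a) (n - k) * qchoose (a + k - 1) k)
        + (kummerCert n a (k + 1) - kummerCert n a k) := by
  obtain ⟨m, rfl⟩ := Nat.exists_eq_add_of_le hk
  have h_top : 2 * (k + m + 1 : ℕ) + a = (2 * (k + m : ℕ) + a) + 1 + 1 := by push_cast; ring
  have h_bot : a + (k + 1 : ℕ) - 1 = (a + k - 1) + 1 := by push_cast; ring
  have h_abs := qchoose_mul_add_one (2 * (k + m : ℕ) + a) m
  rw [kummerCert, kummerCert, h_top, show k + m + 1 - k = m + 1 by omega,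
    show k + m - k = m by omega, show k + m + 1 - (k + 1) = m by omega,
    qchoose_add_one_succ, h_bot, qchoose_add_one_succ, qchoose_succ]
  push_cast at h_abs ⊢
  field_simp
  linear_combination (-2 * qchoose (a + k - 1) k * ((m : ℚ) + 1)) * h_abs

lemma kummerSum_succ (n : ℕ) (a : ℚ) :
    kummerSum (n + 1) a = 2 * (2 * n + 1 + a) / (n + 1) * kummerSum n a := by
  have h_last : kummerCert n a (n + 1) = -qchoose (a + (n + 1 : ℕ) - 1) (n + 1) := by
    rw [kummerCert, Nat.sub_self, qchoose_zero]
    push_cast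
    field_simp
  rw [kummerSum, sum_range_succ, Nat.sub_self, qchoose_zero,
    sum_congr rfl fun k hk => kummer_summand_succ a (Nat.lt_succ_iff.mp (mem_range.mp hk)),
    sum_add_distrib, ← mul_sum, sum_range_sub, h_last, kummerCert, kummerSum]
  simp

lemma two_pow_mul_qchoose_half_succ (n : ℕ) (a : ℚ) :
    2 ^ (2 * (n + 1)) * qchoose (a / 2 + (n + 1 : ℕ) - 1 / 2) (n + 1)
      = 2 * (2 * n + 1 + a) / (n + 1) * (2 ^ (2 * n) * qchoose (a / 2 + n - 1 / 2) n) := by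
  rw [show a / 2 + (n + 1 : ℕ) - 1 / 2 = (a / 2 + n - 1 / 2) + 1 by push_cast; ring,
    qchoose_add_one_succ, mul_add, pow_add]
  field_simp
  ring

/-- A terminating form of Kummer's theorem. -/
theorem kummer_identity (n : ℕ) (a : ℚ) :
    ∑ k ∈ Finset.range (n + 1),
        qchoose (2 * n + a) (n - k) * qchoose (a + k - 1) k
      = 2 ^ (2 * n) * qchoose (a / 2 + n - 1 / 2) n := by
  change kummerSum n a = _
  induction n with
  | zero => simp [kummerSum, qchoose_zero]
  | succ n ih => rw [kummerSum_succ, ih, two_pow_mul_qchoose_half_succ]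
end

section
/- For every integer n ≥ 0, f_1(n) = 2^{2n}·C(3n/2, n), where C(3n/2, n) is the generalized binomial coefficient with rational upper argument 3n/2. -/
open Finset

/-- `f₁(n) = Σ_{i=n}^{2n} C(3n+1, n+i+1)·C(i, n)`. -/
def f1 (n : ℕ) : ℕ :=
  ∑ i ∈ Finset.Icc n (2 * n), (3 * n + 1).choose (n + i + 1) * i.choose n

/-!
Since `C(n + j, n)` is the `j`-th coefficient of `(1 - X)^-(n+1)`,
`f₁(n) = [Xⁿ] (1 + X)^(3n+1) (1 - X)^-(n+1)`. Write `3n + 1 = 2N + e` with `e ∈ {0, 1}`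
and expand `(1 + X)^(2N) = ((1 - X)² + 4X)^N`: the `k`-th term contributes
`C(N, k) 4ᵏ [X^(n-k)] (1 + X)^e (1 - X)^(2(n-k) - e)`. That coefficient is
`4^(n-k) C((e - 1)/2, n - k)`: for `e = 0` it is `(-1)ʳ C(2r, r) = 4ʳ C(-1/2, r)`,
for `e = 1` it is the middle coefficient of the antisymmetric `(1 + X)(1 - X)^(2r-1)`,
which vanishes unless `r = 0`. Chu–Vandermonde sums the terms to
`4ⁿ C(N + (e - 1)/2, n) = 4ⁿ C(3n/2, n)`.

The rational power `(1 - X)^r` is `rescale (-1) (binomialSeries ℚ r)`.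
-/

open PowerSeries

theorem qchoose_eq_ringChoose (q : ℚ) (k : ℕ) : qchoose q k = Ring.choose q k := by
  rw [Ring.choose_eq_smul, ← Polynomial.aeval_eq_smeval, Polynomial.aeval_def,
    Polynomial.eval₂_eq_eval_map, descPochhammer_map, descPochhammer_eval_eq_prod_range,
    qchoose, smul_eq_mul, div_eq_inv_mul]

theorem Ring.choose_neg_half (r : ℕ) :
    Ring.choose (-1 / 2 : ℚ) r = (-1 / 4) ^ r * r.centralBinom := by
  simp only [← qchoose_eq_ringChoose, qchoose]
  induction r with
  | zero => simp
  | succ r ih =>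
    have h : ((r + 1).centralBinom : ℚ) = 2 * (2 * r + 1) * r.centralBinom / (r + 1) := by
      rw [eq_div_iff (by positivity), mul_comm]
      exact_mod_cast Nat.succ_mul_centralBinom_succ r
    rw [prod_range_succ, Nat.factorial_succ, Nat.cast_mul, mul_comm ((r + 1 : ℕ) : ℚ),
      ← div_mul_div_comm, ih, h]
    field_simp
    push_cast
    ring

namespace PowerSeries

theorem rescale_neg_one_binomialSeries_natCast (m : ℕ) :
    rescale (-1) (binomialSeries ℚ (m : ℚ)) = (1 - X) ^ m := by
  rw [binomialSeries_nat, map_pow, map_add, map_one, rescale_neg_one_X, sub_eq_add_neg]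

theorem invOneSubPow_eq_rescale_neg_one_binomialSeries (d : ℕ) :
    (invOneSubPow ℚ d : ℚ⟦X⟧) = rescale (-1) (binomialSeries ℚ (-d : ℚ)) := by
  have h : binomialSeries ℚ (-d : ℤ) = binomialSeries ℚ (-d : ℚ) := by
    ext k
    simpa using Ring.map_choose (Int.castRingHom ℚ) (-(d : ℤ)) k
  rw [← h, ← rescale_neg_one_invOneSubPow, rescale_rescale, neg_one_mul, neg_neg, rescale_one,
    RingHom.id_apply]

theorem coeff_rescale_neg_one_binomialSeries_two_mul (r : ℕ) :
    coeff r (rescale (-1) (binomialSeries ℚ (2 * r : ℚ))) =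
      4 ^ r * Ring.choose (-1 / 2 : ℚ) r := by
  have h : (2 * r : ℚ) = ((2 * r : ℕ) : ℚ) := by push_cast; ring
  rw [h, coeff_rescale, binomialSeries_coeff, Ring.choose_neg_half, Ring.choose_natCast,
    ← Nat.centralBinom_eq_two_mul_choose, ← mul_assoc, ← mul_pow]
  norm_num

theorem coeff_one_add_X_mul_rescale_neg_one_binomialSeries (r : ℕ) :
    coeff r ((1 + X) * rescale (-1) (binomialSeries ℚ (2 * r - 1 : ℚ))) =
      4 ^ r * Ring.choose (0 : ℚ) r := by
  rcases r with _ | r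
  · simp [coeff_mul, coeff_rescale]
  · have h : (2 * ((r + 1 : ℕ) : ℚ) - 1) = ((2 * r + 1 : ℕ) : ℚ) := by push_cast; ring
    rw [h, add_mul, one_mul, map_add, coeff_succ_X_mul, coeff_rescale, coeff_rescale,
      binomialSeries_coeff, binomialSeries_coeff, Ring.choose_natCast, Ring.choose_natCast,
      Nat.choose_symm_half]
    simp [pow_succ]

theorem coeff_one_add_X_pow_mul_rescale_neg_one_binomialSeries (e r : ℕ) (he : e ≤ 1) :
    coeff r ((1 + X) ^ e * rescale (-1) (binomialSeries ℚ (2 * r - e : ℚ))) =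
      4 ^ r * Ring.choose (((e : ℚ) - 1) / 2) r := by
  interval_cases e
  · simpa using coeff_rescale_neg_one_binomialSeries_two_mul r
  · simpa using coeff_one_add_X_mul_rescale_neg_one_binomialSeries r

end PowerSeries

theorem sum_range_choose_mul_ite_ringChoose (N n : ℕ) (s : ℚ) :
    ∑ k ∈ range (N + 1), (N.choose k : ℚ) * (if k ≤ n then Ring.choose s (n - k) else 0) =
      Ring.choose ((N : ℚ) + s) n := by
  rw [Ring.add_choose_eq n (Commute.all _ _),
    Nat.sum_antidiagonal_eq_sum_range_succ (fun a b => Ring.choose (N : ℚ) a * Ring.choose s b)]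
  simp only [Ring.choose_natCast]
  have hN : range (N + 1) ⊆ range (N + n + 1) := range_subset_range.mpr (by omega)
  have hn : range (n + 1) ⊆ range (N + n + 1) := range_subset_range.mpr (by omega)
  rw [sum_subset hN fun k _ hk => by
      rw [Nat.choose_eq_zero_of_lt (by simpa using hk), Nat.cast_zero, zero_mul],
    ← sum_subset hn fun k _ hk => by rw [if_neg (by simpa using hk), mul_zero]]
  exact sum_congr rfl fun k hk => by rw [if_pos (Nat.lt_succ_iff.mp (mem_range.mp hk))]

theorem f1_eq_coeff (n : ℕ) :
    (f1 n : ℚ) = coeff n ((1 + X) ^ (3 * n + 1) * (invOneSubPow ℚ (n + 1) : ℚ⟦X⟧)) := by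
  rw [coeff_mul, invOneSubPow_val_succ_eq_mk_add_choose, Nat.sum_antidiagonal_eq_sum_range_succ
    (fun a b => coeff a ((1 + X) ^ (3 * n + 1) : ℚ⟦X⟧) *
      coeff b (mk fun j => ((n + j).choose n : ℚ))), ← sum_range_reflect, f1, Nat.cast_sum,
    ← Ico_add_one_right_eq_Icc, sum_Ico_eq_sum_range]
  refine sum_congr (by congr 1; omega) fun j hj => ?_
  have hj : j ≤ n := Nat.lt_succ_iff.mp (mem_range.mp hj)
  rw [← binomialSeries_nat (R := ℤ), binomialSeries_coeff, coeff_mk, Ring.choose_natCast,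
    show n.succ - 1 - j = n - j by omega, show n - (n - j) = j by omega,
    show n + (n + j) + 1 = 3 * n + 1 - (n - j) by omega, Nat.choose_symm (by omega)]
  simp [add_comm]

theorem one_add_X_pow_mul_invOneSubPow_eq_sum (N n e : ℕ) (h : 2 * N + e = 3 * n + 1) :
    (1 + X) ^ (3 * n + 1) * (invOneSubPow ℚ (n + 1) : ℚ⟦X⟧) =
      ∑ k ∈ range (N + 1), (N.choose k * 4 ^ k : ℚ) •
        (X ^ k * ((1 + X) ^ e * rescale (-1) (binomialSeries ℚ (2 * ((n : ℚ) - k) - e)))) := by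
  rw [← h, pow_add, pow_mul, show ((1 : ℚ⟦X⟧) + X) ^ 2 = 4 * X + (1 - X) ^ 2 by ring,
    add_pow, sum_mul, sum_mul]
  refine sum_congr rfl fun k hk => ?_
  have hk : k ≤ N := Nat.lt_succ_iff.mp (mem_range.mp hk)
  have hexp : (2 * ((n : ℚ) - k) - e) = ((2 * (N - k) : ℕ) : ℚ) + -((n + 1 : ℕ) : ℚ) := by
    have h' : (2 * N + e : ℚ) = 3 * n + 1 := by exact_mod_cast h
    push_cast [hk]
    linarith
  rw [hexp, binomialSeries_add, map_mul, rescale_neg_one_binomialSeries_natCast,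
    ← invOneSubPow_eq_rescale_neg_one_binomialSeries, ← pow_mul, mul_pow, Algebra.smul_def]
  simp only [map_mul, map_natCast, map_pow, map_ofNat]
  ring

theorem coeff_one_add_X_pow_mul_invOneSubPow (N n e : ℕ) (he : e ≤ 1)
    (h : 2 * N + e = 3 * n + 1) :
    coeff n ((1 + X) ^ (3 * n + 1) * (invOneSubPow ℚ (n + 1) : ℚ⟦X⟧)) =
      4 ^ n * Ring.choose ((N : ℚ) + ((e : ℚ) - 1) / 2) n := by
  calc _ = ∑ k ∈ range (N + 1), 4 ^ n * ((N.choose k : ℚ) *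
          if k ≤ n then Ring.choose (((e : ℚ) - 1) / 2) (n - k) else 0) := by
        rw [one_add_X_pow_mul_invOneSubPow_eq_sum N n e h, map_sum]
        refine sum_congr rfl fun k _ => ?_
        rw [coeff_smul, coeff_X_pow_mul']
        split_ifs with hkn
        · rw [← Nat.cast_sub hkn,
            coeff_one_add_X_pow_mul_rescale_neg_one_binomialSeries e (n - k) he, smul_eq_mul,
            ← pow_mul_pow_sub 4 hkn]
          ring
        · simp
    _ = 4 ^ n * Ring.choose ((N : ℚ) + ((e : ℚ) - 1) / 2) n := by
        rw [← mul_sum, sum_range_choose_mul_ite_ringChoose]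

theorem f1_eq (n : ℕ) :
    (f1 n : ℚ) = 2 ^ (2 * n) * qchoose (3 * n / 2) n := by
  have hsplit := Nat.div_add_mod (3 * n + 1) 2
  have he : (3 * n + 1) % 2 ≤ 1 := Nat.lt_succ_iff.mp (Nat.mod_lt _ two_pos)
  rw [f1_eq_coeff, coeff_one_add_X_pow_mul_invOneSubPow _ n _ he hsplit, qchoose_eq_ringChoose,
    pow_mul]
  have hsplit' : (2 * ((3 * n + 1) / 2 : ℕ) + ((3 * n + 1) % 2 : ℕ) : ℚ) = 3 * n + 1 := by
    exact_mod_cast hsplit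
  congr 2
  linarith
end

section
/- For every integer n ≥ 0, f_3(n) = 2^{2n-1}·C(3n/2, n) + 2^{2n-1}·C(3n/2 - 1/2, n), where the binomial coefficients on the right are generalized binomial coefficients with rational upper arguments (equivalently, 2·f_3(n) = 4^n·(C(3n/2, n) + C((3n-1)/2, n))). -/
/-!
Put `A(n) = Σ_j C(3n+1, 2n+j+1)·C(n+j, n)`, a companion of `f₃(n) = Σ_j C(3n, 2n+j)·C(n+j, n)`.
Then `A(n) = 4ⁿ·C(3n/2, n)` and `2f₃(n) - A(n) = 4ⁿ·C((3n-1)/2, n)` follow by induction, because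
both pairs satisfy the coupled recurrences
`(n+1)·A(n+1) = 6(3n+1)·(2f₃(n) - A(n))` and `(n+1)·(2f₃(n+1) - A(n+1)) = 2(3n+2)·A(n)`.
For the closed forms these are absorption identities of generalized binomial coefficients.
For the sums they come from creative telescoping: the corresponding combination of summands is a
difference `G(n, j+1) - G(n, j)` of an explicit certificate, which is checked by writing every
summand as a rational multiple of one hypergeometric base term.
-/

open Finset

/-- `f₃(n) = Σ_{i=n}^{2n} C(3n, n+i)·C(i, n)`. -/
def f3 (n : ℕ) : ℕ :=
  ∑ i ∈ Finset.Icc n (2 * n), (3 * n).choose (n + i) * i.choose n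

namespace Nat

theorem cast_choose_succ_right_mul {K : Type*} [CommRing K] (m k : ℕ) :
    (m.choose (k + 1) : K) * (k + 1) = m.choose k * (m - k) := by
  rcases le_or_gt k m with hk | hk
  · have h := congrArg (Nat.cast : ℕ → K) (choose_succ_right_eq m k)
    push_cast [Nat.cast_sub hk] at h
    exact h
  · simp [choose_eq_zero_of_lt hk, choose_eq_zero_of_lt (hk.trans (lt_add_one k))]

theorem cast_choose_mul_succ {K : Type*} [CommRing K] (m k : ℕ) :
    (m.choose k : K) * (m + 1) = (m + 1).choose k * (m + 1 - k) := by
  rcases le_or_gt k (m + 1) with hk | hk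
  · have h := congrArg (Nat.cast : ℕ → K) (choose_mul_succ_eq m k)
    push_cast [Nat.cast_sub hk] at h
    exact h
  · simp [choose_eq_zero_of_lt hk, choose_eq_zero_of_lt ((lt_add_one m).trans hk)]

end Nat

namespace Finset

theorem sum_range_eq_of_eq_zero_of_le {M : Type*} [AddCommMonoid M] {t : ℕ → M} {m N : ℕ}
    (hmN : m ≤ N) (ht : ∀ j, m ≤ j → t j = 0) : ∑ j ∈ range N, t j = ∑ j ∈ range m, t j :=
  (sum_subset (range_subset_range.mpr hmN) fun j _ hj => ht j (by simpa using hj)).symm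

theorem sum_range_eq_zero_of_mul_eq_sub {R : Type*} [CommRing R] [NoZeroDivisors R]
    {c : R} (hc : c ≠ 0) {t g : ℕ → R} (h : ∀ j, c * t j = g (j + 1) - g j) {N : ℕ}
    (h0 : g 0 = 0) (hN : g N = 0) : ∑ j ∈ range N, t j = 0 := by
  refine (mul_eq_zero.mp ?_).resolve_left hc
  rw [mul_sum, sum_congr rfl fun j _ => h j, sum_range_sub, hN, h0, sub_zero]

theorem prod_range_succ_add_one_sub {R : Type*} [CommRing R] (q : R) (k : ℕ) :
    ∏ i ∈ range (k + 1), (q + 1 - i) = (q + 1) * ∏ i ∈ range k, (q - i) := by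
  rw [prod_range_succ', mul_comm]
  push_cast
  simp only [add_sub_add_right_eq_sub, sub_zero]

end Finset

theorem qchoose_add_one_succ_mul (q : ℚ) (k : ℕ) :
    qchoose (q + 1) (k + 1) * (k + 1) = (q + 1) * qchoose q k := by
  rw [qchoose, qchoose, prod_range_succ_add_one_sub, Nat.factorial_succ]
  push_cast
  field_simp

theorem qchoose_add_one_mul_sub (q : ℚ) (k : ℕ) :
    qchoose (q + 1) k * (q + 1 - k) = (q + 1) * qchoose q k := by
  rw [qchoose, qchoose, div_mul_eq_mul_div, ← prod_range_succ, prod_range_succ_add_one_sub,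
    mul_div_assoc]

theorem succ_mul_qchoose_three_halves (n : ℕ) :
    (n + 1) * qchoose (3 * (n + 1) / 2) (n + 1)
      = 3 * (3 * n + 1) / 2 * qchoose (3 * n / 2 - 1 / 2) n := by
  have h1 := qchoose_add_one_succ_mul (3 * n / 2 - 1 / 2 + 1) n
  have h2 := qchoose_add_one_mul_sub (3 * n / 2 - 1 / 2) n
  rw [show (3 * n / 2 - 1 / 2 + 1 + 1 : ℚ) = 3 * (n + 1) / 2 by ring] at h1
  apply mul_left_cancel₀ (show ((n : ℚ) + 1) / 2 ≠ 0 by positivity)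
  linear_combination (n + 1 : ℚ) / 2 * h1 + (3 * n / 2 - 1 / 2 + 1 + 1 : ℚ) * h2

theorem succ_mul_qchoose_three_halves_sub_half (n : ℕ) :
    (n + 1) * qchoose (3 * (n + 1) / 2 - 1 / 2) (n + 1)
      = (3 * n + 2) / 2 * qchoose (3 * n / 2) n := by
  have h := qchoose_add_one_succ_mul (3 * n / 2) n
  rw [show (3 * n / 2 + 1 : ℚ) = 3 * (n + 1) / 2 - 1 / 2 by ring] at h
  linear_combination h

def fTerm (n j : ℕ) : ℕ := (3 * n).choose (2 * n + j) * (n + j).choose n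

def aTerm (n j : ℕ) : ℕ := (3 * n + 1).choose (2 * n + j + 1) * (n + j).choose n

def aSum (n : ℕ) : ℕ := ∑ j ∈ range (n + 1), aTerm n j

def wzBase (n j : ℕ) : ℕ := (3 * n + 3).choose (2 * n + j + 2) * (n + j).choose n

theorem f3_eq_sum_fTerm (n : ℕ) : f3 n = ∑ j ∈ range (n + 1), fTerm n j := by
  rw [f3, ← Ico_add_one_right_eq_Icc, sum_Ico_eq_sum_range, show 2 * n + 1 - n = n + 1 by omega]
  refine sum_congr rfl fun j _ => ?_
  rw [fTerm, show n + (n + j) = 2 * n + j by ring]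

theorem fTerm_eq_zero {n j : ℕ} (h : n + 1 ≤ j) : fTerm n j = 0 := by
  rw [fTerm, Nat.choose_eq_zero_of_lt (by omega), zero_mul]

theorem aTerm_eq_zero {n j : ℕ} (h : n + 1 ≤ j) : aTerm n j = 0 := by
  rw [aTerm, Nat.choose_eq_zero_of_lt (by omega), zero_mul]

theorem wzBase_eq_zero {n j : ℕ} (h : n + 1 < j) : wzBase n j = 0 := by
  rw [wzBase, Nat.choose_eq_zero_of_lt (by omega), zero_mul]

theorem cast_f3_eq_sum {n N : ℕ} (h : n + 1 ≤ N) :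
    (f3 n : ℚ) = ∑ j ∈ range N, (fTerm n j : ℚ) := by
  rw [f3_eq_sum_fTerm, ← sum_range_eq_of_eq_zero_of_le h fun _ => fTerm_eq_zero, Nat.cast_sum]

theorem cast_aSum_eq_sum {n N : ℕ} (h : n + 1 ≤ N) :
    (aSum n : ℚ) = ∑ j ∈ range N, (aTerm n j : ℚ) := by
  rw [aSum, ← sum_range_eq_of_eq_zero_of_le h fun _ => aTerm_eq_zero, Nat.cast_sum]

section Ratios

variable (n j : ℕ)

theorem cast_choose_add_one_eq_add_two :
    ((3 * n + 2).choose (2 * n + j + 2) : ℚ) * (2 * n + j + 2)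
      = (3 * n + 2) * ((3 * n + 1).choose (2 * n + j + 1) : ℚ) := by
  exact_mod_cast (Nat.add_one_mul_choose_eq (3 * n + 1) (2 * n + j + 1)).symm

theorem cast_choose_add_two_eq_add_three :
    ((3 * n + 2).choose (2 * n + j + 2) : ℚ) * (3 * n + 3)
      = ((3 * n + 3).choose (2 * n + j + 2) : ℚ) * (n + 1 - j) := by
  have h := Nat.cast_choose_mul_succ (K := ℚ) (3 * n + 2) (2 * n + j + 2)
  push_cast at h
  linear_combination h

theorem cast_choose_succ_succ_add :
    ((n + j + 1).choose (n + 1) : ℚ) * (n + 1) = (n + j + 1) * ((n + j).choose n : ℚ) := by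
  exact_mod_cast (Nat.add_one_mul_choose_eq (n + j) n).symm

theorem cast_fTerm_eq :
    (fTerm n j : ℚ) = (2 * n + j + 1) * (2 * n + j + 2) * (n + 1 - j)
      / ((3 * n + 1) * (3 * n + 2) * (3 * n + 3)) * wzBase n j := by
  have e1 : ((3 * n + 1).choose (2 * n + j + 1) : ℚ) * (2 * n + j + 1)
      = (3 * n + 1) * ((3 * n).choose (2 * n + j) : ℚ) := by
    exact_mod_cast (Nat.add_one_mul_choose_eq (3 * n) (2 * n + j)).symm
  have e2 := cast_choose_add_one_eq_add_two n j
  have e3 := cast_choose_add_two_eq_add_three n j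
  rw [fTerm, wzBase]
  push_cast
  field_simp
  linear_combination (-(3 * (n : ℚ) + 2) * (3 * n + 3) * e1
    - (2 * n + j + 1) * (3 * n + 3) * e2 + (2 * n + j + 1) * (2 * n + j + 2) * e3)
    * ((n + j).choose n : ℚ)

theorem cast_aTerm_eq :
    (aTerm n j : ℚ)
      = (2 * n + j + 2) * (n + 1 - j) / ((3 * n + 2) * (3 * n + 3)) * wzBase n j := by
  have e2 := cast_choose_add_one_eq_add_two n j
  have e3 := cast_choose_add_two_eq_add_three n j
  rw [aTerm, wzBase]
  push_cast
  field_simp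
  linear_combination (-(3 * (n : ℚ) + 3) * e2 + (2 * n + j + 2) * e3) * ((n + j).choose n : ℚ)

theorem cast_aTerm_succ_eq :
    (aTerm (n + 1) j : ℚ)
      = (3 * n + 4) * (n + j + 1) / ((2 * n + j + 3) * (n + 1)) * wzBase n j := by
  have e1 : ((3 * n + 4).choose (2 * n + j + 3) : ℚ) * (2 * n + j + 3)
      = (3 * n + 4) * ((3 * n + 3).choose (2 * n + j + 2) : ℚ) := by
    exact_mod_cast (Nat.add_one_mul_choose_eq (3 * n + 3) (2 * n + j + 2)).symm
  have e2 := cast_choose_succ_succ_add n j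
  rw [aTerm, wzBase, show 3 * (n + 1) + 1 = 3 * n + 4 by ring,
    show 2 * (n + 1) + j + 1 = 2 * n + j + 3 by ring, show n + 1 + j = n + j + 1 by ring]
  push_cast
  field_simp
  linear_combination ((n : ℚ) + 1) * ((n + j + 1).choose (n + 1) : ℚ) * e1
    + (3 * n + 4) * ((3 * n + 3).choose (2 * n + j + 2) : ℚ) * e2

theorem cast_fTerm_succ_eq :
    (fTerm (n + 1) j : ℚ) = (n + j + 1) / (n + 1) * wzBase n j := by
  have e := cast_choose_succ_succ_add n j
  rw [fTerm, wzBase, show 3 * (n + 1) = 3 * n + 3 by ring,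
    show 2 * (n + 1) + j = 2 * n + j + 2 by ring, show n + 1 + j = n + j + 1 by ring]
  push_cast
  field_simp
  linear_combination ((3 * n + 3).choose (2 * n + j + 2) : ℚ) * e

theorem cast_wzBase_succ_eq :
    (wzBase n (j + 1) : ℚ)
      = (n + 1 - j) * (n + j + 1) / ((2 * n + j + 3) * (j + 1)) * wzBase n j := by
  have e1 := Nat.cast_choose_succ_right_mul (K := ℚ) (3 * n + 3) (2 * n + j + 2)
  have e2 := Nat.cast_choose_succ_right_mul (K := ℚ) (n + j + 1) n
  have e3 := cast_choose_succ_succ_add n j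
  push_cast at e1 e2
  rw [wzBase, wzBase, show 2 * n + (j + 1) + 2 = 2 * n + j + 2 + 1 by ring,
    show n + (j + 1) = n + j + 1 by ring]
  push_cast
  field_simp
  linear_combination ((n + j + 1).choose n : ℚ) * (j + 1) * e1
    + ((3 * n + 3).choose (2 * n + j + 2) : ℚ) * (n + 1 - j) * (e3 - e2)

end Ratios

/- The two certificates are the rational functions produced by Zeilberger's algorithm,
multiplied by the base term. -/

noncomputable def aSumCert (n j : ℕ) : ℚ :=
  j * ((n + 1) * (n + 2) - (5 * n + 4) * j - 2 * j ^ 2) * wzBase n j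

noncomputable def f3Cert (n j : ℕ) : ℚ :=
  -j * (j + 5 * n + 5) * wzBase n j

theorem aSum_summand_telescopes (n j : ℕ) :
    (3 * n + 2) * (n + 1) * ((n + 1) * (aTerm (n + 1) j : ℚ) + 6 * (3 * n + 1) * aTerm n j
      - 12 * (3 * n + 1) * fTerm n j) = aSumCert n (j + 1) - aSumCert n j := by
  rw [aSumCert, aSumCert, cast_aTerm_succ_eq, cast_aTerm_eq, cast_fTerm_eq, cast_wzBase_succ_eq]
  push_cast
  field_simp
  ring

theorem f3_summand_telescopes (n j : ℕ) :
    3 * (n + 1) * (2 * (n + 1) * (fTerm (n + 1) j : ℚ) - 2 * (3 * n + 2) * aTerm n j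
      - (n + 1) * aTerm (n + 1) j) = f3Cert n (j + 1) - f3Cert n j := by
  rw [f3Cert, f3Cert, cast_fTerm_succ_eq, cast_aTerm_succ_eq, cast_aTerm_eq, cast_wzBase_succ_eq]
  push_cast
  field_simp
  ring

theorem aSum_succ_recurrence (n : ℕ) :
    (n + 1) * (aSum (n + 1) : ℚ) = 6 * (3 * n + 1) * (2 * f3 n - aSum n) := by
  have h := sum_range_eq_zero_of_mul_eq_sub (by positivity) (aSum_summand_telescopes n)
    (N := n + 2) (by simp [aSumCert]) (by rw [aSumCert, wzBase_eq_zero (by omega)]; simp)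
  simp only [sum_add_distrib, sum_sub_distrib, ← mul_sum] at h
  rw [cast_f3_eq_sum (N := n + 2) (by omega), cast_aSum_eq_sum (N := n + 2) le_rfl,
    cast_aSum_eq_sum (n := n) (N := n + 2) (by omega)]
  linear_combination h

theorem f3_succ_recurrence (n : ℕ) :
    (n + 1) * (2 * f3 (n + 1) - aSum (n + 1) : ℚ) = 2 * (3 * n + 2) * aSum n := by
  have h := sum_range_eq_zero_of_mul_eq_sub (by positivity) (f3_summand_telescopes n)
    (N := n + 2) (by simp [f3Cert]) (by rw [f3Cert, wzBase_eq_zero (by omega)]; simp)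
  simp only [sum_sub_distrib, ← mul_sum] at h
  rw [cast_f3_eq_sum (N := n + 2) le_rfl, cast_aSum_eq_sum (N := n + 2) le_rfl,
    cast_aSum_eq_sum (n := n) (N := n + 2) (by omega)]
  linear_combination h

theorem aSum_and_f3_closed_form (n : ℕ) :
    (aSum n : ℚ) = 4 ^ n * qchoose (3 * n / 2) n ∧
      2 * (f3 n : ℚ) - aSum n = 4 ^ n * qchoose (3 * n / 2 - 1 / 2) n := by
  induction n with
  | zero => norm_num [aSum, aTerm, f3, qchoose]
  | succ n ih =>
    obtain ⟨hA, hB⟩ := ih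
    have hn : (n : ℚ) + 1 ≠ 0 := by positivity
    push_cast
    constructor
    · apply mul_left_cancel₀ hn
      linear_combination aSum_succ_recurrence n + 6 * (3 * n + 1) * hB
        - 4 ^ (n + 1) * succ_mul_qchoose_three_halves n
    · apply mul_left_cancel₀ hn
      linear_combination f3_succ_recurrence n + 2 * (3 * n + 2) * hA
        - 4 ^ (n + 1) * succ_mul_qchoose_three_halves_sub_half n

theorem f3_eq (n : ℕ) :
    (f3 n : ℚ) = (2 : ℚ) ^ (2 * (n : ℤ) - 1) * qchoose (3 * n / 2) n
      + (2 : ℚ) ^ (2 * (n : ℤ) - 1) * qchoose (3 * n / 2 - 1 / 2) n := by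
  obtain ⟨hA, hB⟩ := aSum_and_f3_closed_form n
  have hpow : (2 : ℚ) ^ (2 * (n : ℤ) - 1) = 4 ^ n / 2 := by
    rw [zpow_sub₀ two_ne_zero, zpow_mul, zpow_natCast, zpow_one]
    norm_num
  rw [hpow]
  linear_combination (hA + hB) / 2
end

section
/- For every integer n ≥ 0, f_5(n) = 2^{2n}·C(3n/2 - 1/2, n), where C(3n/2 - 1/2, n) is the generalized binomial coefficient with rational upper argument (3n-1)/2. -/
open Finset

/-- `f₅(n) = Σ_{i=n-1}^{2n-1} C(3n, n+i+1)·C(i, n-1)` for `n ≥ 1`, with `f₅(0) = 1`. -/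
def f5 (n : ℕ) : ℕ :=
  if n = 0 then 1
  else ∑ i ∈ Finset.Icc (n - 1) (2 * n - 1), (3 * n).choose (n + i + 1) * i.choose (n - 1)

/-
After the substitution `j = 2n - 1 - i`, `f₅(n) = Σ_{j ≤ n} C(3n, j) C(2n-1-j, n-1)`. Zeilberger's
algorithm produces a certificate `G(n, j)` with
`n(n+1)²(n+2) T(n+2, j) - 4n(3n+1)(3n+3)(3n+5) T(n, j) = G(n, j+1) - G(n, j)` for the summand `T`;
summing over `j` telescopes to the same second-order recurrence for `f₅`. The closed form satisfies
it too, since raising `n` by 2 shifts the upper argument `(3n-1)/2` by 3, and both sides agree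
for `n ≤ 3`.
-/

open scoped Nat

lemma Nat.cast_factorial_add {R : Type*} [CommSemiring R] (m k : ℕ) :
    ((m + k)! : R) = m ! * ∏ i ∈ range k, ((m : R) + 1 + i) := by
  rw [← Nat.factorial_mul_ascFactorial, Nat.ascFactorial_eq_prod_range]
  push_cast
  rfl

theorem eq_of_two_step_rec {M : Type*} [MonoidWithZero M] [IsLeftCancelMulZero M]
    {u v a b : ℕ → M} {N : ℕ} (ha : ∀ n, N ≤ n → a n ≠ 0)
    (hu : ∀ n, N ≤ n → a n * u (n + 2) = b n * u n)
    (hv : ∀ n, N ≤ n → a n * v (n + 2) = b n * v n) (hinit : ∀ n < N + 2, u n = v n) :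
    ∀ n, u n = v n := by
  intro n
  induction n using Nat.strong_induction_on with
  | _ n ih =>
    by_cases hn : n < N + 2
    · exact hinit n hn
    obtain ⟨m, rfl⟩ : ∃ m, n = m + 2 := ⟨n - 2, by omega⟩
    have hm : N ≤ m := by omega
    exact mul_left_cancel₀ (ha m hm) (by rw [hu m hm, hv m hm, ih m (by omega)])

lemma qchoose_add_three (q : ℚ) (k : ℕ) :
    (k + 1) * (k + 2) * (q + 1 - k) * qchoose (q + 3) (k + 2)
      = (q + 1) * (q + 2) * (q + 3) * qchoose q k := by
  have hshift :
      ∏ j ∈ range (k + 2), (q + 3 - j) = (q + 3) * (q + 2) * ∏ j ∈ range k, (q + 1 - j) := by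
    rw [prod_range_succ', prod_range_succ']
    push_cast
    ring_nf
  have hpeel : (q + 1 - k) * ∏ j ∈ range k, (q + 1 - j) = (q + 1) * ∏ j ∈ range k, (q - j) := by
    rw [mul_comm, ← prod_range_succ (fun j : ℕ => q + 1 - j), prod_range_succ']
    push_cast
    ring_nf
  rw [qchoose, qchoose, hshift, Nat.factorial_succ, Nat.factorial_succ]
  push_cast
  field_simp
  linear_combination (k + 2) * (q + 3) * (q + 2) * hpeel

def f5Term (n j : ℕ) : ℚ :=
  (3 * n).choose j * (2 * n - 1 - j).choose (n - 1)

noncomputable def f5Sum (n : ℕ) : ℚ :=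
  ∑ j ∈ range (n + 1), f5Term n j

lemma f5_eq_f5Sum {n : ℕ} (hn : n ≠ 0) : (f5 n : ℚ) = f5Sum n := by
  rw [f5, if_neg hn, Nat.cast_sum, f5Sum, ← Ico_add_one_right_eq_Icc, sum_Ico_eq_sum_range,
    show 2 * n - 1 + 1 - (n - 1) = n + 1 by omega, ← sum_range_reflect]
  refine sum_congr rfl fun k hk => ?_
  have hk : k ≤ n := Nat.lt_succ_iff.mp (mem_range.mp hk)
  rw [f5Term, show n + (n - 1 + (n + 1 - 1 - k)) + 1 = 3 * n - k by omega,
    Nat.choose_symm (by omega), show n - 1 + (n + 1 - 1 - k) = 2 * n - 1 - k by omega]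
  push_cast
  rfl

def f5RecLead (n : ℚ) : ℚ := n * (n + 1) ^ 2 * (n + 2)

def f5RecTrail (n : ℚ) : ℚ := 4 * n * (3 * n + 1) * (3 * n + 3) * (3 * n + 5)

def wzPoly (n j : ℚ) : ℚ :=
  j * (n * (2880 - 106752*n - 1152048*n^2 - 4700496*n^3 - 10437312*n^4 - 14221272*n^5
      - 12459288*n^6 - 7061472*n^7 - 2506896*n^8 - 507384*n^9 - 44712*n^10))
  + j^2 * (-1440 + 49056*n + 780432*n^2 + 4285428*n^3 + 12132384*n^4 + 20270220*n^5
      + 21151644*n^6 + 13963428*n^7 + 5673456*n^8 + 1295676*n^9 + 127332*n^10)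
  + j^3 * (2160 - 100764*n - 1128906*n^2 - 4754202*n^3 - 10543620*n^4 - 13745376*n^5
      - 10910010*n^6 - 5188770*n^7 - 1359720*n^8 - 150984*n^9)
  + j^4 * (-720 + 80658*n + 712449*n^2 + 2422062*n^3 + 4271316*n^4 + 4285032*n^5 + 2468043*n^6
      + 760536*n^7 + 97200*n^8)
  + j^5 * (n * (-31890 - 233034*n - 643710*n^2 - 886092*n^3 - 651102*n^4 - 244458*n^5 - 36882*n^6))
  + j^6 * (n * (6480 + 40953*n + 90864*n^2 + 93030*n^3 + 44928*n^4 + 8289*n^5))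
  + j^7 * (n * (-690 - 3744*n - 6348*n^2 - 4320*n^3 - 1026*n^4))
  + j^8 * (n * (30 + 138*n + 162*n^2 + 54*n^3))

/-- The WZ certificate of the recurrence, found by Zeilberger's algorithm: for `j ≤ n` it is
`f5Term n j` times `wzPoly n j / ((3n-j+1)⋯(3n-j+6) (n-j+1) (n-j+2))`. -/
noncomputable def wzCert (n j : ℕ) : ℚ :=
  wzPoly n j * (3 * n)! * (2 * n - 1 - j)! / (j ! * (3 * n + 6 - j)! * (n - 1)! * (n + 2 - j)!)

lemma f5Term_eq_factorial {n j : ℕ} (hj : j ≤ n) :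
    f5Term n j = (3 * n)! * (2 * n - 1 - j)! / (j ! * (3 * n - j)! * (n - 1)! * (n - j)!) := by
  rw [f5Term, Nat.cast_choose ℚ (by omega), Nat.cast_choose ℚ (by omega),
    show 2 * n - 1 - j - (n - 1) = n - j by omega]
  field_simp

lemma f5Term_telescope {n j : ℕ} (hn : 2 ≤ n) (hj : j ≤ n) :
    f5RecLead n * f5Term (n + 2) j - f5RecTrail n * f5Term n j
      = wzCert n (j + 1) - wzCert n j := by
  rw [f5Term_eq_factorial hj, f5Term_eq_factorial (by omega), wzCert, wzCert]
  rw [show 3 * (n + 2) = 3 * n + 6 by ring,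
      show 2 * (n + 2) - 1 - j = (2 * n - 2 - j) + 5 by omega,
      show n + 2 - 1 = (n - 1) + 2 by omega,
      show 2 * n - 1 - j = (2 * n - 2 - j) + 1 by omega,
      show 2 * n - 1 - (j + 1) = 2 * n - 2 - j by omega,
      show 3 * n + 6 - (j + 1) = (3 * n - j) + 5 by omega,
      show 3 * n + 6 - j = (3 * n - j) + 6 by omega,
      show n + 2 - (j + 1) = (n - j) + 1 by omega,
      show n + 2 - j = (n - j) + 2 by omega]
  have e1 : ((3 * n - j : ℕ) : ℚ) = 3 * n - j := by
    push_cast [Nat.cast_sub (show j ≤ 3 * n by omega)]; ring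
  have e2 : ((2 * n - 2 - j : ℕ) : ℚ) = 2 * n - 2 - j := by
    rw [Nat.cast_sub (show j ≤ 2 * n - 2 by omega), Nat.cast_sub (show 2 ≤ 2 * n by omega)]
    push_cast; ring
  have e3 : ((n - j : ℕ) : ℚ) = n - j := Nat.cast_sub hj
  have e4 : ((n - 1 : ℕ) : ℚ) = n - 1 := by
    rw [Nat.cast_sub (by omega)]; push_cast; ring
  rw [Nat.cast_factorial_add (3 * n) 6, Nat.cast_factorial_add (3 * n - j) 6,
    Nat.cast_factorial_add (3 * n - j) 5, Nat.cast_factorial_add (2 * n - 2 - j) 5,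
    Nat.cast_factorial_add (2 * n - 2 - j) 1, Nat.cast_factorial_add (n - j) 2,
    Nat.cast_factorial_add (n - j) 1, Nat.cast_factorial_add (n - 1) 2,
    Nat.cast_factorial_add j 1]
  field_simp
  simp only [prod_range_succ, prod_range_zero, e1, e2, e3, e4, wzPoly, f5RecLead, f5RecTrail]
  push_cast
  ring

lemma wzCert_zero (n : ℕ) : wzCert n 0 = 0 := by
  simp [wzCert, wzPoly]

lemma wzCert_boundary {n : ℕ} (hn : 2 ≤ n) :
    wzCert n (n + 1) = -f5RecLead n * (f5Term (n + 2) (n + 1) + f5Term (n + 2) (n + 2)) := by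
  rw [f5Term_eq_factorial (by omega), f5Term_eq_factorial le_rfl, wzCert]
  rw [show 3 * (n + 2) = 3 * n + 6 by ring,
      show 2 * (n + 2) - 1 - (n + 1) = (n - 2) + 4 by omega,
      show 2 * (n + 2) - 1 - (n + 2) = (n - 2) + 3 by omega,
      show 3 * n + 6 - (n + 1) = (2 * n + 4) + 1 by omega,
      show 3 * n + 6 - (n + 2) = 2 * n + 4 by omega,
      show n + 2 - (n + 1) = 1 by omega,
      show n + 2 - 1 = (n - 2) + 3 by omega,
      show n + 1 = (n - 2) + 3 by omega,
      show n - 1 = (n - 2) + 1 by omega,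
      show 2 * n - 1 - (n - 2 + 3) = n - 2 by omega,
      Nat.sub_self, show n + 2 = (n - 2) + 4 by omega]
  rw [Nat.cast_factorial_add (3 * n) 6, Nat.cast_factorial_add (2 * n + 4) 1,
    Nat.cast_factorial_add (n - 2) 3, Nat.cast_factorial_add (n - 2) 1,
    Nat.cast_factorial_add (n - 2) 4]
  have e : ((n - 2 : ℕ) : ℚ) = n - 2 := by
    rw [Nat.cast_sub hn]; push_cast; ring
  field_simp
  simp only [prod_range_succ, prod_range_zero, wzPoly, f5RecLead]
  push_cast [e]
  ring

lemma f5Sum_rec {n : ℕ} (hn : 2 ≤ n) :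
    f5RecLead n * f5Sum (n + 2) = f5RecTrail n * f5Sum n := by
  have htel : ∑ j ∈ range (n + 1),
      (f5RecLead n * f5Term (n + 2) j - f5RecTrail n * f5Term n j)
      = wzCert n (n + 1) := by
    rw [sum_congr rfl fun j hj => f5Term_telescope hn (Nat.lt_succ_iff.mp (mem_range.mp hj)),
      sum_range_sub, wzCert_zero, sub_zero]
  rw [sum_sub_distrib, ← mul_sum, ← mul_sum, wzCert_boundary hn] at htel
  rw [f5Sum, f5Sum, sum_range_succ, sum_range_succ]
  linear_combination htel

noncomputable def f5Closed (n : ℕ) : ℚ :=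
  2 ^ (2 * n) * qchoose (3 * n / 2 - 1 / 2) n

lemma f5Closed_rec (n : ℕ) : f5RecLead n * f5Closed (n + 2) = f5RecTrail n * f5Closed n := by
  have h := qchoose_add_three (3 * n / 2 - 1 / 2) n
  rw [show (3 * n / 2 - 1 / 2 : ℚ) + 3 = 3 * ↑(n + 2) / 2 - 1 / 2 by push_cast; ring] at h
  rw [f5RecLead, f5RecTrail, f5Closed, f5Closed, pow_mul, pow_mul, pow_add]
  push_cast at h ⊢
  linear_combination (32 * n * 4 ^ n) * h

theorem f5_eq (n : ℕ) :
    (f5 n : ℚ) = 2 ^ (2 * n) * qchoose (3 * n / 2 - 1 / 2) n := by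
  refine eq_of_two_step_rec (u := fun n => (f5 n : ℚ)) (v := f5Closed) (N := 2)
    (a := fun n => f5RecLead n) (b := fun n => f5RecTrail n) ?_ ?_ (fun m _ => f5Closed_rec m) ?_ n
  · intro m hm
    have hm0 : (0 : ℚ) < m := by exact_mod_cast (by omega : 0 < m)
    unfold f5RecLead
    positivity
  · intro m hm
    simp only [f5_eq_f5Sum (by omega : m ≠ 0), f5_eq_f5Sum (by omega : m + 2 ≠ 0)]
    exact f5Sum_rec hm
  · intro m hm
    interval_cases m <;>
      norm_num [f5, f5Closed, qchoose, sum_Icc_succ_top, prod_range_succ, Nat.factorial,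
        Nat.choose_eq_factorial_div_factorial]
end

section
/- Let α be the unique formal power series over ℚ with constant term 0 satisfying α·(1-α)·(1-2α) = X. Then in ℚ[[X]] one has (1 - 6α + 6α²)·Σ_{n≥0} f_1(n)·X^n = 1. -/
/-!
Write `γ = X * w` with `w(0) ≠ 0`. For every power series `F`, the `N`-th coefficient of
`F(γ) * γ' / w ^ (N + 1)` equals that of `F`: this is invariance of the residue of
`F(γ) γ' / γ ^ (N + 1)` under the change of variables `γ`, and for the monomial `F = X ^ d`
with `d ≠ N` the integrand is the derivative of `γ ^ (d - N) / (d - N)`, which has no residue.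

Since `α * Q(α) = X` for `Q = (1 - X) * (1 - 2X)`, the choice `w = Q(α)⁻¹`, `F = Q⁻¹ ^ (N + 1)`
gives the Lagrange inversion formula `[X^N] α' = [X^N] Q⁻¹ ^ (N + 1)`. The choice
`w = (1 + X)⁻¹` turns `Q⁻¹ ^ (N + 1)` into `(1 - X)⁻¹ ^ (N + 1) * (1 + X) ^ (3N + 1)`, whose
`N`-th coefficient is `f1 N`. Finally, differentiating `α(1 - α)(1 - 2α) = X` gives
`α' * (1 - 6α + 6α²) = 1`.
-/

open PowerSeries Finset

namespace PowerSeries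

theorem subst_one_sub_X_mul_one_sub_two_mul_X {R : Type*} [CommRing R] {a : R⟦X⟧}
    (ha : HasSubst a) : ((1 - X) * (1 - 2 * X) : R⟦X⟧).subst a = (1 - a) * (1 - 2 * a) := by
  simp only [← coe_substAlgHom ha, map_mul, map_sub, map_one, map_ofNat, substAlgHom_X]

variable {K : Type*} [Field K]

theorem subst_inv_mul_subst {a f : K⟦X⟧} (ha : HasSubst a) (hf : constantCoeff f ≠ 0) :
    f⁻¹.subst a * f.subst a = (1 : K⟦X⟧) := by
  rw [← subst_mul ha, PowerSeries.inv_mul_cancel f hf, ← coe_substAlgHom ha, map_one]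

section Residue

variable [CharZero K] {w : K⟦X⟧}

theorem coeff_succ_derivative_X_mul_mul_inv_pow (hw : constantCoeff w ≠ 0) (s : ℕ) :
    coeff (s + 1) (d⁄dX K (X * w) * w⁻¹ ^ (s + 2)) = 0 := by
  set v := w⁻¹
  have hwv : w * v = 1 := PowerSeries.mul_inv_cancel w hw
  have key : (s + 1) • (d⁄dX K (X * w) * v ^ (s + 2))
      = (s + 1) • v ^ (s + 1) - X * d⁄dX K (v ^ (s + 1)) := by
    simp only [v, Derivation.leibniz, Derivation.leibniz_pow, derivative_inv', derivative_X,
      smul_eq_mul, nsmul_eq_mul, Nat.add_sub_cancel]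
    push_cast
    linear_combination ((s + 1) * v ^ (s + 1)) * hwv
  have hcoeff := congrArg (coeff (s + 1)) key
  rw [map_nsmul, map_sub, map_nsmul, coeff_succ_X_mul, coeff_derivative, nsmul_eq_mul,
    nsmul_eq_mul] at hcoeff
  push_cast at hcoeff
  exact (mul_eq_zero.mp (by linear_combination hcoeff)).resolve_left (Nat.cast_add_one_ne_zero s)

theorem coeff_X_mul_pow_mul_derivative_mul_inv_pow (hw : constantCoeff w ≠ 0) (d N : ℕ) :
    coeff N ((X * w) ^ d * d⁄dX K (X * w) * w⁻¹ ^ (N + 1)) = if d = N then 1 else 0 := by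
  rcases lt_or_ge N d with hNd | hdN
  · rw [if_neg hNd.ne', mul_pow, mul_assoc, mul_assoc, coeff_X_pow_mul', if_neg (by omega)]
  obtain ⟨k, rfl⟩ := Nat.exists_eq_add_of_le hdN
  have hwd : w ^ d * w⁻¹ ^ d = 1 := by rw [← mul_pow, PowerSeries.mul_inv_cancel w hw, one_pow]
  have hcancel : (X * w) ^ d * d⁄dX K (X * w) * w⁻¹ ^ (d + k + 1)
      = X ^ d * (d⁄dX K (X * w) * w⁻¹ ^ (k + 1)) := by
    linear_combination (X ^ d * d⁄dX K (X * w) * w⁻¹ ^ (k + 1)) * hwd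
  rw [hcancel, add_comm d k, coeff_X_pow_mul]
  rcases k with _ | s
  · simp [hw]
  · rw [if_neg (by omega)]
    exact coeff_succ_derivative_X_mul_mul_inv_pow hw s

theorem coeff_aeval_mul_derivative_mul_inv_pow (hw : constantCoeff w ≠ 0) (p : Polynomial K)
    (N : ℕ) :
    coeff N (Polynomial.aeval (X * w) p * d⁄dX K (X * w) * w⁻¹ ^ (N + 1)) = p.coeff N := by
  induction p using Polynomial.induction_on' with
  | add p q hp hq => simp only [map_add, add_mul, hp, hq, Polynomial.coeff_add]
  | monomial d a =>
    rw [Polynomial.aeval_monomial, ← Algebra.smul_def, smul_mul_assoc, smul_mul_assoc,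
      coeff_smul, coeff_X_mul_pow_mul_derivative_mul_inv_pow hw, Polynomial.coeff_monomial]
    simp

theorem coeff_subst_mul_derivative_mul_inv_pow (hw : constantCoeff w ≠ 0) (F : K⟦X⟧) (N : ℕ) :
    coeff N (F.subst (X * w) * d⁄dX K (X * w) * w⁻¹ ^ (N + 1)) = coeff N F := by
  have hγ : HasSubst (X * w) := HasSubst.X'.mul_left
  set G : K⟦X⟧ := mk fun i ↦ coeff (i + (N + 1)) F
  have hF : F = X ^ (N + 1) * G + (F.trunc (N + 1) : K⟦X⟧) := eq_X_pow_mul_shift_add_trunc _ F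
  have hhigh : (X ^ (N + 1) * G).subst (X * w) * d⁄dX K (X * w) * w⁻¹ ^ (N + 1) = X ^ (N + 1) *
      (w ^ (N + 1) * G.subst (X * w) * d⁄dX K (X * w) * w⁻¹ ^ (N + 1)) := by
    rw [subst_mul hγ, subst_pow hγ, subst_X hγ]
    ring
  nth_rw 1 [hF]
  rw [subst_add hγ, add_mul, add_mul, map_add, hhigh, coeff_X_pow_mul', if_neg (by omega),
    zero_add, subst_coe hγ, coeff_aeval_mul_derivative_mul_inv_pow hw, coeff_trunc,
    if_pos (Nat.lt_succ_self N)]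

end Residue

theorem coeff_derivative_eq_coeff_inv_pow_of_mul_subst_eq_X [CharZero K] {ψ α : K⟦X⟧}
    (hψ : constantCoeff ψ ≠ 0) (hα0 : constantCoeff α = 0) (hα : α * ψ.subst α = X) (N : ℕ) :
    coeff N (d⁄dX K α) = coeff N (ψ⁻¹ ^ (N + 1)) := by
  obtain ⟨w, rfl⟩ := X_dvd_iff.mpr hα0
  have hγ : HasSubst (X * w) := HasSubst.X'.mul_left
  have hwψ : w * ψ.subst (X * w) = 1 :=
    mul_left_cancel₀ X_ne_zero (by rw [mul_one, ← mul_assoc, hα])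
  have hw : constantCoeff w ≠ 0 :=
    left_ne_zero_of_mul_eq_one (by simpa using congrArg constantCoeff hwψ)
  have hψinv : ψ⁻¹.subst (X * w) = w := by
    linear_combination w * subst_inv_mul_subst hγ hψ - ψ⁻¹.subst (X * w) * hwψ
  have hwN : w ^ (N + 1) * w⁻¹ ^ (N + 1) = 1 := by
    rw [← mul_pow, PowerSeries.mul_inv_cancel w hw, one_pow]
  rw [← coeff_subst_mul_derivative_mul_inv_pow hw (ψ⁻¹ ^ (N + 1)), subst_pow hγ, hψinv]
  congr 1
  linear_combination (-d⁄dX K (X * w)) * hwN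

theorem coeff_inv_one_sub_X_mul_one_sub_two_mul_X_pow [CharZero K] (N : ℕ) :
    coeff N (((1 - X) * (1 - 2 * X) : K⟦X⟧)⁻¹ ^ (N + 1))
      = coeff N ((mk fun n ↦ ((N + n).choose N : K)) * (1 + X) ^ (3 * N + 1)) := by
  set Q : K⟦X⟧ := (1 - X) * (1 - 2 * X)
  set S : K⟦X⟧ := mk fun n ↦ ((N + n).choose N : K)
  set w : K⟦X⟧ := (1 + X)⁻¹
  have hγ : HasSubst (X * w) := HasSubst.X'.mul_left
  have hw1 : (1 + X) * w = 1 := PowerSeries.mul_inv_cancel _ (by simp)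
  have hw : constantCoeff w ≠ 0 := by simp [w]
  have hwinv : w⁻¹ = 1 + X := (inv_eq_iff_mul_eq_one hw).mpr hw1
  have hγ' : d⁄dX K (X * w) = w ^ 2 := by
    simp only [w, Derivation.leibniz, derivative_inv', map_add, derivative_X,
      Derivation.map_one_eq_zero, smul_eq_mul]
    linear_combination (-w) * hw1
  have hQγ : Q.subst (X * w) = w * ((1 - X) * w) := by
    rw [subst_one_sub_X_mul_one_sub_two_mul_X hγ]
    linear_combination ((1 + X) * w - 1 - 2 * w + X * w) * hw1
  have hQ : constantCoeff Q ≠ 0 := by simp [Q]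
  have hS : S * (1 - X) ^ (N + 1) = 1 := mk_add_choose_mul_one_sub_pow_eq_one K N
  have hQinvγ : (Q⁻¹.subst (X * w)) ^ (N + 1) = S * (1 + X) ^ (2 * (N + 1)) := by
    set q := Q⁻¹.subst (X * w)
    have hq : q * (1 - X) = (1 + X) ^ 2 := by
      have hqQ : q * (w * ((1 - X) * w)) = 1 := hQγ ▸ subst_inv_mul_subst hγ hQ
      linear_combination (-(q * (1 - X)) * ((1 + X) * w + 1)) * hw1 + (1 + X) ^ 2 * hqQ
    calc q ^ (N + 1) = q ^ (N + 1) * (S * (1 - X) ^ (N + 1)) := by rw [hS, mul_one]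
      _ = S * (q * (1 - X)) ^ (N + 1) := by rw [mul_pow]; ring
      _ = S * (1 + X) ^ (2 * (N + 1)) := by rw [hq, pow_mul]
  rw [← coeff_subst_mul_derivative_mul_inv_pow hw, subst_pow hγ, hQinvγ, hγ', hwinv]
  congr 1
  linear_combination (S * (1 + X) ^ (3 * N + 1) * ((1 + X) * w + 1)) * hw1

end PowerSeries

theorem f1_eq_sum_range (N : ℕ) :
    f1 N = ∑ k ∈ range (N + 1), (3 * N + 1).choose k * (N + (N - k)).choose N := by
  refine sum_nbij' (2 * N - ·) (2 * N - ·) ?_ ?_ ?_ ?_ fun i hi ↦ ?_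
  any_goals (intro i hi; simp only [mem_Icc, mem_range] at hi ⊢; omega)
  rw [mem_Icc] at hi
  rw [← Nat.choose_symm (by omega : N + i + 1 ≤ 3 * N + 1)]
  congr 2 <;> omega

theorem coeff_mk_choose_mul_one_add_X_pow {R : Type*} [CommSemiring R] (N : ℕ) :
    coeff N ((mk fun n ↦ ((N + n).choose N : R)) * (1 + X) ^ (3 * N + 1)) = (f1 N : R) := by
  have hbinom (n k : ℕ) : coeff k ((1 + X : R⟦X⟧) ^ n) = n.choose k := by
    have hcoe : (1 + X : R⟦X⟧) ^ n = (((1 + Polynomial.X) ^ n : Polynomial R) : R⟦X⟧) := by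
      simp
    rw [hcoe, Polynomial.coeff_coe, Polynomial.coeff_one_add_X_pow]
  rw [mul_comm, coeff_mul, Finset.Nat.sum_antidiagonal_eq_sum_range_succ (fun i j ↦
      coeff i ((1 + X : R⟦X⟧) ^ (3 * N + 1)) * coeff j (mk fun n ↦ ((N + n).choose N : R))),
    f1_eq_sum_range]
  push_cast
  simp only [hbinom, coeff_mk]

theorem f1_generating_function (α : PowerSeries ℚ)
    (h0 : PowerSeries.constantCoeff α = 0)
    (hα : α * (1 - α) * (1 - 2 * α) = PowerSeries.X) :
    (1 - 6 * α + 6 * α ^ 2) * PowerSeries.mk (fun n => (f1 n : ℚ)) = 1 := by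
  have hQα : α * ((1 - X) * (1 - 2 * X) : ℚ⟦X⟧).subst α = X := by
    rw [subst_one_sub_X_mul_one_sub_two_mul_X (HasSubst.of_constantCoeff_zero' h0), ← mul_assoc,
      hα]
  have hderiv : mk (fun n ↦ (f1 n : ℚ)) = d⁄dX ℚ α := by
    ext N
    rw [coeff_mk, coeff_derivative_eq_coeff_inv_pow_of_mul_subst_eq_X (by simp) h0 hQα,
      coeff_inv_one_sub_X_mul_one_sub_two_mul_X_pow, coeff_mk_choose_mul_one_add_X_pow]
  have h2 : d⁄dX ℚ (2 : ℚ⟦X⟧) = 0 := by exact_mod_cast (d⁄dX ℚ).map_natCast 2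
  have hchain := congrArg (d⁄dX ℚ) hα
  simp only [Derivation.leibniz, Derivation.map_one_eq_zero, h2, derivative_X, map_sub,
    smul_eq_mul] at hchain
  rw [hderiv]
  linear_combination hchain
end

section
/- For every integer m ≥ 0, if n = 2m+1 then (2^{2n-1}/n)·C(3n/2 - 2, n-1) = 2·m!·(6m)!/((2m)!·(2m+1)!·(3m)!), and if n = 2m+2 then (2^{2n-2}/n)·C(3n/2 - 3/2, n-1) = 6·m!·(6m+1)!/((2m)!·(2m+2)!·(3m)!), where the binomial coefficients are generalized binomial coefficients with rational upper arguments. -/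
open Finset

/-!
Both upper arguments have the form `a + k - 1/2` with `k` the lower argument, and reversing the
falling product `(a + k - 1/2) ⋯ (a + 1/2)` gives the rising product of half-integers
`(2a + 1)(2a + 3) ⋯ (2a + 2k - 1) / 2^k`. Since `(2N)! = 2^N N! (2N - 1)!!`, this is a quotient of
factorials, and the rest is cancellation.
-/

theorem prod_range_add_half (a k : ℕ) :
    ∏ j ∈ range k, ((a : ℚ) + 1 / 2 + j) =
      (2 * a + 2 * k).factorial * a.factorial /
        ((2 * a).factorial * (a + k).factorial * 2 ^ (2 * k)) := by
  induction k with
  | zero => simp [div_self, Nat.factorial_ne_zero]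
  | succ k ih =>
    rw [prod_range_succ, ih, show 2 * a + 2 * (k + 1) = 2 * a + 2 * k + 1 + 1 by ring,
      ← add_assoc, Nat.factorial_succ (2 * a + 2 * k + 1), Nat.factorial_succ (2 * a + 2 * k),
      Nat.factorial_succ (a + k)]
    have := (a + k).factorial_pos
    have := (2 * a).factorial_pos
    push_cast
    field_simp
    ring

theorem qchoose_add_sub_half (a k : ℕ) :
    qchoose ((a : ℚ) + k - 1 / 2) k =
      (2 * a + 2 * k).factorial * a.factorial /
        ((2 * a).factorial * (a + k).factorial * k.factorial * 2 ^ (2 * k)) := by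
  have reflect :
      ∏ j ∈ range k, ((a : ℚ) + k - 1 / 2 - j) = ∏ j ∈ range k, ((a : ℚ) + 1 / 2 + j) := by
    rw [← prod_range_reflect]
    refine prod_congr rfl fun j hj => ?_
    rw [Nat.cast_sub (by grind), Nat.cast_sub (by grind)]
    push_cast
    ring
  rw [qchoose, reflect, prod_range_add_half, div_div]
  ring

theorem two_pow_div_mul_qchoose_odd (m : ℕ) :
    (2 : ℚ) ^ (4 * m + 1) / (2 * m + 1) * qchoose (3 * m - 1 / 2) (2 * m)
        = 2 * (m.factorial * (6 * m).factorial : ℚ)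
            / ((2 * m).factorial * (2 * m + 1).factorial * (3 * m).factorial) := by
  rw [show (3 * m : ℚ) - 1 / 2 = m + (2 * m : ℕ) - 1 / 2 by push_cast; ring,
    qchoose_add_sub_half, show 2 * m + 2 * (2 * m) = 6 * m by ring, show m + 2 * m = 3 * m by ring,
    Nat.factorial_succ]
  have := (2 * m).factorial_pos
  have := (3 * m).factorial_pos
  push_cast
  field_simp
  ring

theorem two_pow_div_mul_qchoose_even (m : ℕ) :
    (2 : ℚ) ^ (4 * m + 2) / (2 * m + 2) * qchoose (3 * m + 3 / 2) (2 * m + 1)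
        = 6 * (m.factorial * (6 * m + 1).factorial : ℚ)
            / ((2 * m).factorial * (2 * m + 2).factorial * (3 * m).factorial) := by
  rw [show (3 * m : ℚ) + 3 / 2 = (m + 1 : ℕ) + (2 * m + 1 : ℕ) - 1 / 2 by push_cast; ring,
    qchoose_add_sub_half, show 2 * (m + 1) + 2 * (2 * m + 1) = 6 * m + 1 + 1 + 1 + 1 by ring,
    show m + 1 + (2 * m + 1) = 3 * m + 1 + 1 by ring, show 2 * (m + 1) = 2 * m + 1 + 1 by ring]
  simp only [Nat.factorial_succ]
  have := (2 * m).factorial_pos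
  have := (3 * m).factorial_pos
  have := (6 * m).factorial_pos
  have := m.factorial_pos
  push_cast
  field_simp
  ring

theorem Ncn_terms_factorial_form (m : ℕ) :
    (∀ n : ℕ, n = 2 * m + 1 →
      (2 : ℚ) ^ (2 * n - 1) / n * qchoose (3 * n / 2 - 2) (n - 1)
        = 2 * (m.factorial * (6 * m).factorial : ℚ)
            / ((2 * m).factorial * (2 * m + 1).factorial * (3 * m).factorial)) ∧
    (∀ n : ℕ, n = 2 * m + 2 →
      (2 : ℚ) ^ (2 * n - 2) / n * qchoose (3 * n / 2 - 3 / 2) (n - 1)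
        = 6 * (m.factorial * (6 * m + 1).factorial : ℚ)
            / ((2 * m).factorial * (2 * m + 2).factorial * (3 * m).factorial)) := by
  constructor
  · rintro n rfl
    rw [show 2 * (2 * m + 1) - 1 = 4 * m + 1 by omega, Nat.add_sub_cancel,
      show 3 * ((2 * m + 1 : ℕ) : ℚ) / 2 - 2 = 3 * m - 1 / 2 by push_cast; ring]
    push_cast
    exact two_pow_div_mul_qchoose_odd m
  · rintro n rfl
    rw [show 2 * (2 * m + 2) - 2 = 4 * m + 2 by omega, show 2 * m + 2 - 1 = 2 * m + 1 by omega,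
      show 3 * ((2 * m + 2 : ℕ) : ℚ) / 2 - 3 / 2 = 3 * m + 3 / 2 by push_cast; ring]
    push_cast
    exact two_pow_div_mul_qchoose_even m
end
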